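/- arXiv:2301.13037 — 11 statements merged into one kernel-verified Lean document; each statement's English description precedes it below -/
import Mathlib

section
/- In a one-sided matching problem with exactly two agents, a mechanism mapping each profile of strict preferences (each agent ranks being matched with the other vs. being single) to one of the two matchings is strategy-proof and efficient if and only if it is either a dictatorship (one fixed agent always gets their top choice) or a unanimity rule (one of the two matchings is the default, and the other is chosen only if both agents prefer it). -/
/- Two agents {0,1}.  A one-sided matching on two agents is an involution on `Fin 2`;
there are exactly two: the identity (both single) and the swap (matched together).
Each agent's strict preference over the two matchings is encoded by the matching
they prefer.  A mechanism maps profiles to matchings. -/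

abbrev Matching2 := {μ : Fin 2 → Fin 2 // Function.Involutive μ}

/-- Efficiency: if both agents prefer the same matching, it is selected. -/
def Eff0 (f : (Fin 2 → Matching2) → Matching2) : Prop :=
  ∀ (P : Fin 2 → Matching2) (m : Matching2), (∀ i, P i = m) → f P = m

/-- Strategy-proofness: no agent can misreport and move the outcome to their
preferred matching when the truthful outcome was not their preferred matching. -/
def SP0 (f : (Fin 2 → Matching2) → Matching2) : Prop :=
  ∀ (P : Fin 2 → Matching2) (i : Fin 2) (m : Matching2),
    ¬ (f (Function.update P i m) = P i ∧ f P ≠ P i)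

/-- Dictatorship: a fixed agent always gets their top choice. -/
def Dict0 (f : (Fin 2 → Matching2) → Matching2) : Prop :=
  ∃ k : Fin 2, ∀ P, f P = P k

/-- Unanimity rule: a default matching `d` is chosen unless both agents prefer the other. -/
def Unan0 (f : (Fin 2 → Matching2) → Matching2) : Prop :=
  ∃ d : Matching2, ∀ P, (f P ≠ d ↔ ∀ i, P i ≠ d)

/-!
Efficiency fixes the outcome at the two unanimous profiles. Since there are only two matchings,
the remaining profiles are one profile in which the agents disagree and its mirror image with the
agents swapped. If the mechanism picks the same matching at both, that matching is a default which
only unanimity overrules; otherwise it follows the same agent at both, who is then a dictator.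
Both kinds of rules are easily seen to be efficient and strategy-proof.
-/

section TwoOutcomes

variable {α : Type*} {P Q : Fin 2 → α}

theorem eq_of_ne_of_ne_of_card_eq_two (hα : Nat.card α = 2) {x y z : α}
    (hx : x ≠ y) (hz : z ≠ y) : x = z :=
  ((Nat.card_eq_two_iff' y).mp hα).unique hx hz

theorem exists_apply_eq_of_apply_ne (hα : Nat.card α = 2) (hP : P 0 ≠ P 1) (x : α) :
    ∃ k, P k = x := by
  by_cases hx : P 0 = x
  · exact ⟨0, hx⟩
  · exact ⟨1, eq_of_ne_of_ne_of_card_eq_two hα hP.symm (Ne.symm hx)⟩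

theorem eq_or_eq_comp_swap_of_apply_ne (hα : Nat.card α = 2) (hP : P 0 ≠ P 1)
    (hQ : Q 0 ≠ Q 1) : Q = P ∨ Q = P ∘ Equiv.swap 0 1 := by
  obtain ⟨k, hk⟩ := exists_apply_eq_of_apply_ne hα hP (Q 0)
  fin_cases k
  · have h1 : Q 1 = P 1 := eq_of_ne_of_ne_of_card_eq_two hα (hk ▸ hQ.symm) hP.symm
    exact .inl (funext fun i => by fin_cases i <;> simp_all)
  · have h1 : Q 1 = P 0 := eq_of_ne_of_ne_of_card_eq_two hα (hk ▸ hQ.symm) hP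
    exact .inr (funext fun i => by fin_cases i <;> simp_all)

theorem apply_eq_apply_zero_of_apply_eq (hP : P 0 = P 1) (i : Fin 2) : P i = P 0 := by
  fin_cases i
  exacts [rfl, hP.symm]

end TwoOutcomes

theorem Matching2.card_eq_two : Nat.card Matching2 = 2 := by
  let : DecidablePred (Function.Involutive (α := Fin 2)) := fun μ =>
    inferInstanceAs (Decidable (∀ x, μ (μ x) = x))
  rw [Nat.card_eq_fintype_card]
  decide +zetaReduce

section Mechanism

variable {f : (Fin 2 → Matching2) → Matching2}

theorem Eff0.apply_eq_of_apply_eq (heff : Eff0 f) {P : Fin 2 → Matching2} (hP : P 0 = P 1) :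
    f P = P 0 :=
  heff P (P 0) (apply_eq_apply_zero_of_apply_eq hP)

theorem Eff0.unan0_of_apply_comp_swap_eq (heff : Eff0 f) {P : Fin 2 → Matching2}
    (hP : P 0 ≠ P 1) (h : f (P ∘ Equiv.swap 0 1) = f P) : Unan0 f := by
  refine ⟨f P, fun Q => ?_⟩
  by_cases hQ : Q 0 = Q 1
  · rw [heff.apply_eq_of_apply_eq hQ]
    exact ⟨fun h i => apply_eq_apply_zero_of_apply_eq hQ i ▸ h, fun h => h 0⟩
  · have hfQ : f Q = f P := by
      rcases eq_or_eq_comp_swap_of_apply_ne Matching2.card_eq_two hP hQ with rfl | rfl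
      exacts [rfl, h]
    simp only [hfQ, ne_eq, not_true_eq_false, false_iff, not_forall, not_not]
    exact exists_apply_eq_of_apply_ne Matching2.card_eq_two hQ _

theorem Eff0.dict0_of_apply_comp_swap_ne (heff : Eff0 f) {P : Fin 2 → Matching2}
    (hP : P 0 ≠ P 1) (h : f (P ∘ Equiv.swap 0 1) ≠ f P) : Dict0 f := by
  obtain ⟨k, hk⟩ := exists_apply_eq_of_apply_ne Matching2.card_eq_two hP (f P)
  have hswap : (P ∘ Equiv.swap 0 1) k ≠ f P := by
    fin_cases k <;> simp [← hk, hP, hP.symm]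
  have hk' : f (P ∘ Equiv.swap 0 1) = (P ∘ Equiv.swap 0 1) k :=
    eq_of_ne_of_ne_of_card_eq_two Matching2.card_eq_two h hswap
  refine ⟨k, fun Q => ?_⟩
  by_cases hQ : Q 0 = Q 1
  · rw [heff.apply_eq_of_apply_eq hQ, apply_eq_apply_zero_of_apply_eq hQ k]
  · rcases eq_or_eq_comp_swap_of_apply_ne Matching2.card_eq_two hP hQ with rfl | rfl
    exacts [hk.symm, hk']

theorem Eff0.dict0_or_unan0 (heff : Eff0 f) : Dict0 f ∨ Unan0 f := by
  obtain ⟨a, b, hab, -⟩ := Nat.card_eq_two_iff.mp Matching2.card_eq_two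
  by_cases h : f (![a, b] ∘ Equiv.swap 0 1) = f ![a, b]
  exacts [.inr (heff.unan0_of_apply_comp_swap_eq hab h),
    .inl (heff.dict0_of_apply_comp_swap_ne hab h)]

theorem Dict0.eff0 (hf : Dict0 f) : Eff0 f := by
  obtain ⟨k, hk⟩ := hf
  exact fun P m hm => (hk P).trans (hm k)

theorem Dict0.sp0 (hf : Dict0 f) : SP0 f := by
  obtain ⟨k, hk⟩ := hf
  rintro P i m ⟨hmis, htruth⟩
  have hik : i ≠ k := by rintro rfl; exact htruth (hk P)
  rw [hk, Function.update_of_ne hik.symm] at hmis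
  exact htruth ((hk P).trans hmis)

theorem Unan0.eff0 (hf : Unan0 f) : Eff0 f := by
  obtain ⟨d, hd⟩ := hf
  intro P m hm
  by_cases hmd : m = d
  · subst hmd
    by_contra hne
    exact (hd P).mp hne 0 (hm 0)
  · exact eq_of_ne_of_ne_of_card_eq_two Matching2.card_eq_two
      ((hd P).mpr fun i => hm i ▸ hmd) hmd

theorem Unan0.sp0 (hf : Unan0 f) : SP0 f := by
  obtain ⟨d, hd⟩ := hf
  rintro P i m ⟨hmis, htruth⟩
  by_cases hPi : P i = d
  · exact (hd P).mp (hPi ▸ htruth) i hPi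
  · have hfP : f P = d := eq_of_ne_of_ne_of_card_eq_two Matching2.card_eq_two htruth (Ne.symm hPi)
    obtain ⟨j, hj⟩ : ∃ j, P j = d := by
      by_contra! h
      exact (hd P).mpr h hfP
    have hji : j ≠ i := by rintro rfl; exact hPi hj
    exact (hd (Function.update P i m)).mp (hmis ▸ hPi) j (by rwa [Function.update_of_ne hji])

end Mechanism

theorem stmt0 (f : (Fin 2 → Matching2) → Matching2) :
    (SP0 f ∧ Eff0 f) ↔ (Dict0 f ∨ Unan0 f) := by
  constructor
  · exact fun ⟨_, heff⟩ => heff.dict0_or_unan0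
  · rintro (hf | hf)
    exacts [⟨hf.sp0, hf.eff0⟩, ⟨hf.sp0, hf.eff0⟩]
end

section
/- Every sequential dictatorship for one-sided matching is efficient and group strategy-proof. -/
/- One-sided matching framework.
Agents: a type `A`.  A matching is an involution `μ : A → A` (a fixed point is a
single agent).  Each agent `i` has a strict total order over `A`, where `i` itself
represents staying single. -/

abbrev Pref (A : Type) := {r : A → A → Prop // IsStrictTotalOrder A r}
abbrev Profile (A : Type) := A → Pref A
abbrev Matching (A : Type) := {μ : A → A // Function.Involutive μ}

/-- `μ` Pareto dominates `η` at profile `P`. -/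
def dominates {A : Type} (P : Profile A) (μ η : A → A) : Prop :=
  (∀ i, μ i = η i ∨ (P i).1 (μ i) (η i)) ∧ ∃ i, (P i).1 (μ i) (η i)

/-- A mechanism is efficient if its output is never Pareto dominated. -/
def Efficient {A : Type} (f : Profile A → Matching A) : Prop :=
  ∀ P, ¬ ∃ μ : Matching A, dominates P μ.1 (f P).1

/-- Group strategy-proofness: no coalition `S` has a misreport making every member
weakly better off and some member strictly better off. -/
def GroupSP {A : Type} (f : Profile A → Matching A) : Prop :=
  ¬ ∃ (P P' : Profile A) (S : Set A),
      (∀ i, i ∉ S → P' i = P i) ∧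
      (∀ i ∈ S, (f P').1 i = (f P).1 i ∨ (P i).1 ((f P').1 i) ((f P).1 i)) ∧
      (∃ i ∈ S, (P i).1 ((f P').1 i) ((f P).1 i))

/-- `b` is the top choice of preference `r`. -/
def TopChoice {A : Type} (r : Pref A) (b : A) : Prop := ∀ c, c ≠ b → r.1 b c

/- Sequential dictatorships.  A submatching is a partial involution `ν : A → Option A`
(`none` = not yet matched; `ν a = some a` = `a` is single).  At each step, the agent
designated by the picking order `φ` is matched with their most preferred remaining
partner (possibly themself). -/

/-- One step of the sequential-dictatorship algorithm: dictator `d` (unmatched in `ν`)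
picks their `(P d)`-best remaining agent `b` (where `b = d` means staying single). -/
def SDStep {A : Type} [DecidableEq A] (P : Profile A) (d : A) (ν ν' : A → Option A) : Prop :=
  ν d = none ∧ ∃ b, ν b = none ∧ (∀ c, ν c = none → c ≠ b → (P d).1 b c) ∧
    ν' = fun a => if a = d then some b else if a = b then some d else ν a

/-- `f` is a sequential dictatorship: there is a picking order `φ` such that, for every
profile, iterating the dictatorial steps from the empty submatching produces `f P`. -/
def IsSeqDict {A : Type} [DecidableEq A] (f : Profile A → Matching A) : Prop :=
  ∃ φ : (A → Option A) → A, ∀ P : Profile A, ∃ (k : ℕ) (ν : ℕ → (A → Option A)),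
    ν 0 = (fun _ => none) ∧
    (∀ i < k, SDStep P (φ (ν i)) (ν i) (ν (i + 1))) ∧
    (∀ a, ν k a = some ((f P).1 a))

/-! Along a run of the algorithm no pair is ever undone, and every dictator receives his top
choice among the agents still unmatched. A matching that all agents weakly prefer to the outcome
therefore gives, by induction along the run, each dictator his pick, so it is the outcome itself.
For a coalition whose misreport leaves each member weakly better off, the truthful and the
manipulated runs coincide step by step: an outsider reports truthfully, and an insider cannot end
up weakly above his true top choice among the same remaining agents without getting exactly it. -/

namespace Pref

variable {A : Type} (r : Pref A)

theorem asymm {x y : A} (h : r.1 x y) : ¬ r.1 y x := by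
  have := r.2
  exact _root_.asymm h

theorem eq_of_weakly_better_than_best {s : A → Prop} {b c : A}
    (hb : ∀ x, s x → x ≠ b → r.1 b x) (hc : s c) (hcb : c = b ∨ r.1 c b) : c = b := by
  by_contra hne
  exact r.asymm (hcb.resolve_left hne) (hb c hc hne)

end Pref

section SeqDict

variable {A : Type} [DecidableEq A]

namespace SDStep

variable {P : Profile A} {d : A} {ν ν' : A → Option A}

theorem apply_of_eq_some (hs : SDStep P d ν ν') {a x : A} (h : ν a = some x) :
    ν' a = some x := by
  obtain ⟨hd, b, hb, -, rfl⟩ := hs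
  have had : a ≠ d := by rintro rfl; simp [hd] at h
  have hab : a ≠ b := by rintro rfl; simp [hb] at h
  simp [had, hab, h]

theorem symm_of_symm (hs : SDStep P d ν ν') (hν : ∀ a x, ν a = some x → ν x = some a)
    {a x : A} (h : ν' a = some x) : ν' x = some a := by
  obtain ⟨hd, b, hb, -, rfl⟩ := hs
  by_cases had : a = d
  · subst had
    obtain rfl : b = x := by simpa using h
    by_cases hba : b = a <;> simp [hba]
  by_cases hab : a = b
  · subst hab
    obtain rfl : d = x := by simpa [had] using h
    simp
  simp only [had, hab, if_false] at h
  have hxa := hν a x h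
  have hxd : x ≠ d := by rintro rfl; simp [hd] at hxa
  have hxb : x ≠ b := by rintro rfl; simp [hb] at hxa
  simp [hxd, hxb, hxa]

theorem eq_of_apply_eq {P' : Profile A} {ν₁ ν₂ : A → Option A} (hs₁ : SDStep P d ν ν₁)
    (hs₂ : SDStep P' d ν ν₂) (h : ν₁ d = ν₂ d) : ν₁ = ν₂ := by
  obtain ⟨-, b₁, -, -, rfl⟩ := hs₁
  obtain ⟨-, b₂, -, -, rfl⟩ := hs₂
  obtain rfl : b₁ = b₂ := by simpa using h
  rfl

end SDStep

section Run

variable {P : Profile A} {φ : (A → Option A) → A} {k : ℕ} {ν : ℕ → A → Option A}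

theorem run_apply_of_eq_some (hstep : ∀ i < k, SDStep P (φ (ν i)) (ν i) (ν (i + 1)))
    {i j : ℕ} (hij : i ≤ j) (hjk : j ≤ k) {a x : A} (h : ν i a = some x) : ν j a = some x := by
  induction j, hij using Nat.le_induction with
  | base => exact h
  | succ n hn ih => exact (hstep n (by omega)).apply_of_eq_some (ih (by omega))

theorem run_outcome_eq (hstep : ∀ i < k, SDStep P (φ (ν i)) (ν i) (ν (i + 1)))
    {η : A → A} (hend : ∀ a, ν k a = some (η a)) {i : ℕ} (hi : i ≤ k) {a x : A}
    (h : ν i a = some x) : η a = x := by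
  simpa [hend] using run_apply_of_eq_some hstep hi le_rfl h

theorem run_symm (hν0 : ν 0 = fun _ => none)
    (hstep : ∀ i < k, SDStep P (φ (ν i)) (ν i) (ν (i + 1))) :
    ∀ i ≤ k, ∀ a x, ν i a = some x → ν i x = some a := by
  intro i
  induction i with
  | zero => simp [hν0]
  | succ n ih => exact fun hn a x h => (hstep n (by omega)).symm_of_symm (ih (by omega)) h

theorem run_agree_of_weakly_better (hν0 : ν 0 = fun _ => none)
    (hstep : ∀ i < k, SDStep P (φ (ν i)) (ν i) (ν (i + 1)))
    {η : A → A} (hend : ∀ a, ν k a = some (η a)) (μ : Matching A)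
    (hμ : ∀ a, μ.1 a = η a ∨ (P a).1 (μ.1 a) (η a)) :
    ∀ i ≤ k, ∀ a x, ν i a = some x → μ.1 a = x := by
  intro i
  induction i with
  | zero => simp [hν0]
  | succ n ih =>
    intro hn
    have hagree := ih (by omega)
    obtain ⟨hd, b, hb, htop, hnext⟩ := hstep n (by omega)
    set d := φ (ν n)
    have hηd : η d = b := run_outcome_eq hstep hend hn (by simp [hnext])
    -- were `μ d` matched in `ν n`, then to `d` (as `μ` extends `ν n`), but `d` is unmatched
    have havail : ν n (μ.1 d) = none := by
      by_contra hne
      obtain ⟨y, hy⟩ := Option.ne_none_iff_exists'.mp hne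
      obtain rfl : d = y := (μ.2 d).symm.trans (hagree _ _ hy)
      simp [run_symm hν0 hstep n (by omega) _ _ hy] at hd
    have hμd : μ.1 d = b := (P d).eq_of_weakly_better_than_best htop havail (hηd ▸ hμ d)
    intro a x h
    simp only [hnext] at h
    split_ifs at h with had hab
    · rw [had, hμd]; simpa using h
    · rw [hab, ← hμd, μ.2 d]; simpa using h
    · exact hagree a x h

theorem runs_eq_of_weakly_better {P' : Profile A} {S : Set A}
    (hout : ∀ i, i ∉ S → P' i = P i) {k' : ℕ} {ν' : ℕ → A → Option A}
    (hν0 : ν 0 = fun _ => none) (hν0' : ν' 0 = fun _ => none)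
    (hstep : ∀ i < k, SDStep P (φ (ν i)) (ν i) (ν (i + 1)))
    (hstep' : ∀ i < k', SDStep P' (φ (ν' i)) (ν' i) (ν' (i + 1)))
    {η η' : A → A} (hend : ∀ a, ν k a = some (η a)) (hend' : ∀ a, ν' k' a = some (η' a))
    (hweak : ∀ i ∈ S, η' i = η i ∨ (P i).1 (η' i) (η i)) :
    ∀ t ≤ k, t ≤ k' → ν t = ν' t := by
  intro t
  induction t with
  | zero => intro _ _; rw [hν0, hν0']
  | succ n ih =>
    intro hk hk'
    have heq := ih (by omega) (by omega)
    have hs := hstep n (by omega)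
    have hs' := hstep' n (by omega)
    rw [← heq] at hs'
    refine hs.eq_of_apply_eq hs' ?_
    obtain ⟨-, b, hb, htop, hnext⟩ := hs
    obtain ⟨-, b', hb', htop', hnext'⟩ := hs'
    set d := φ (ν n)
    suffices b' = b by simp [hnext, hnext', this]
    refine (P d).eq_of_weakly_better_than_best htop hb' ?_
    by_cases hdS : d ∈ S
    · have hηd : η d = b := run_outcome_eq hstep hend hk (by simp [hnext])
      have hηd' : η' d = b' := run_outcome_eq hstep' hend' hk' (by simp [hnext'])
      exact hηd ▸ hηd' ▸ hweak d hdS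
    · rw [hout d hdS] at htop'
      exact (eq_or_ne b' b).imp_right fun hne => htop' b hb hne.symm

theorem outcome_eq_of_runs_eq {k' : ℕ} {P' : Profile A} {ν' : ℕ → A → Option A}
    (hstep : ∀ i < k, SDStep P (φ (ν i)) (ν i) (ν (i + 1)))
    (hstep' : ∀ i < k', SDStep P' (φ (ν' i)) (ν' i) (ν' (i + 1)))
    {η η' : A → A} (hend : ∀ a, ν k a = some (η a)) (hend' : ∀ a, ν' k' a = some (η' a))
    (hagree : ∀ t ≤ k, t ≤ k' → ν t = ν' t) : η = η' := by
  funext a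
  rcases le_total k k' with h | h
  · exact (run_outcome_eq hstep' hend' h (by rw [← hagree k le_rfl h, hend])).symm
  · exact run_outcome_eq hstep hend h (by rw [hagree k' h le_rfl, hend'])

end Run

theorem IsSeqDict.efficient {f : Profile A → Matching A} (h : IsSeqDict f) : Efficient f := by
  obtain ⟨φ, hφ⟩ := h
  rintro P ⟨μ, hweak, j, hj⟩
  obtain ⟨k, ν, hν0, hstep, hend⟩ := hφ P
  rw [run_agree_of_weakly_better hν0 hstep hend μ hweak k le_rfl j _ (hend j)] at hj
  exact (P j).asymm hj hj

theorem IsSeqDict.groupSP {f : Profile A → Matching A} (h : IsSeqDict f) : GroupSP f := by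
  obtain ⟨φ, hφ⟩ := h
  rintro ⟨P, P', S, hout, hweak, j, -, hj⟩
  obtain ⟨k, ν, hν0, hstep, hend⟩ := hφ P
  obtain ⟨k', ν', hν0', hstep', hend'⟩ := hφ P'
  have hagree := runs_eq_of_weakly_better hout hν0 hν0' hstep hstep' hend hend' hweak
  rw [← outcome_eq_of_runs_eq hstep hstep' hend hend' hagree] at hj
  exact (P j).asymm hj hj

end SeqDict

theorem stmt1_general {A : Type} [DecidableEq A]
    (f : Profile A → Matching A) (h : IsSeqDict f) :
    Efficient f ∧ GroupSP f :=
  ⟨h.efficient, h.groupSP⟩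

/-- Every sequential dictatorship is efficient and group strategy-proof. -/
theorem stmt1 {A : Type} [Fintype A] [DecidableEq A]
    (f : Profile A → Matching A) (h : IsSeqDict f) :
    Efficient f ∧ GroupSP f :=
  stmt1_general f h
end

section
/- There is no one-sided matching mechanism for three or more agents that is simultaneously individually rational, group strategy-proof, and efficient. -/
/-- Individual rationality: no agent is ever matched to a partner they rank below
staying single. -/
def IndivRational {A : Type} (f : Profile A → Matching A) : Prop :=
  ∀ P i, (f P).1 i = i ∨ (P i).1 ((f P).1 i) i

/-!
An individually rational, group strategy-proof and efficient mechanism only selects stable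
matchings: if `i` and `j` block `f P`, they can jointly report each other as their only
acceptable partners, and individual rationality and efficiency then force the mechanism to match
them, which makes both strictly better off. But when three agents `a`, `b`, `c` each rank their
successor in the cycle `a → b → c → a` first, their predecessor second and staying single third,
every matching is blocked.
-/

open Function

namespace Pref

variable {A : Type} {r : Pref A} {p q s x y : A}

def raise (r : Pref A) (p : A) : Pref A :=
  ⟨fun x y => y ≠ p ∧ (x = p ∨ r.1 x y),
   { trichotomous := fun x y hxy hyx => by
       by_cases hx : x = p <;> by_cases hy : y = p
       · rw [hx, hy]
       · exact absurd ⟨hy, Or.inl hx⟩ hxy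
       · exact absurd ⟨hx, Or.inl hy⟩ hyx
       · exact r.2.trichotomous x y (fun h => hxy ⟨hy, Or.inr h⟩) (fun h => hyx ⟨hx, Or.inr h⟩)
     irrefl := fun x ⟨hx, h⟩ => h.elim hx (r.2.irrefl x)
     trans := fun x y z ⟨hy, hxy⟩ ⟨hz, hyz⟩ =>
       ⟨hz, hxy.imp_right fun h => r.2.trans x y z h (hyz.resolve_left hy)⟩ }⟩

theorem not_raise_rel_self : ¬ (raise r p).1 x p :=
  fun h => h.1 rfl

theorem raise_rel_self_of_ne (hy : y ≠ p) : (raise r p).1 p y :=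
  ⟨hy, Or.inl rfl⟩

theorem raise_rel_of_rel (hy : y ≠ p) (h : r.1 x y) : (raise r p).1 x y :=
  ⟨hy, Or.inr h⟩

theorem eq_or_rel_of_raise_rel (h : (raise r p).1 x y) : x = p ∨ r.1 x y :=
  h.2

theorem raise_raise_rel_iff (hpq : p ≠ q) : (raise (raise r q) p).1 x q ↔ x = p :=
  ⟨fun h => (eq_or_rel_of_raise_rel h).resolve_right not_raise_rel_self,
   by rintro rfl; exact raise_rel_self_of_ne hpq.symm⟩

def top3 (r : Pref A) (p q s : A) : Pref A :=
  raise (raise (raise r s) q) p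

theorem top3_rel_first_second (hqp : q ≠ p) : (top3 r p q s).1 p q :=
  raise_rel_self_of_ne hqp

theorem top3_rel_second_third (hsp : s ≠ p) (hsq : s ≠ q) : (top3 r p q s).1 q s :=
  raise_rel_of_rel hsp (raise_rel_self_of_ne hsq)

theorem eq_or_eq_of_top3_rel_third (h : (top3 r p q s).1 y s) : y = p ∨ y = q :=
  (eq_or_rel_of_raise_rel h).imp_right fun h =>
    (eq_or_rel_of_raise_rel h).resolve_right not_raise_rel_self

end Pref

section Matching

variable {A : Type}

def IsBlockingPair (P : Profile A) (μ : A → A) (i j : A) : Prop :=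
  i ≠ j ∧ (P i).1 j (μ i) ∧ (P j).1 i (μ j)

theorem involutive_swap_comp [DecidableEq A] {ν : A → A} (hν : Involutive ν) {i j : A}
    (hi : ν i = i) (hj : ν j = j) : Involutive (Equiv.swap i j ∘ ν) := by
  intro x
  by_cases hx : x = i ∨ x = j
  · rcases hx with rfl | rfl <;> simp [hi, hj]
  · push Not at hx
    have hνi : ν x ≠ i := fun h => hx.1 (hν.injective (h.trans hi.symm))
    have hνj : ν x ≠ j := fun h => hx.2 (hν.injective (h.trans hj.symm))
    simp [Equiv.swap_apply_of_ne_of_ne hνi hνj, hν x, Equiv.swap_apply_of_ne_of_ne hx.1 hx.2]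

theorem exists_dominates_of_single [DecidableEq A] {P : Profile A} {ν : A → A}
    (hν : Involutive ν) {i j : A} (hi : ν i = i) (hj : ν j = j) (hij : (P i).1 j i)
    (hji : (P j).1 i j) : ∃ μ : Matching A, dominates P μ.1 ν := by
  refine ⟨⟨Equiv.swap i j ∘ ν, involutive_swap_comp hν hi hj⟩, fun x => ?_, i, ?_⟩
  · by_cases hx : x = i ∨ x = j
    · rcases hx with rfl | rfl
      · exact Or.inr (by simpa [hi] using hij)
      · exact Or.inr (by simpa [hj] using hji)
    · push Not at hx
      refine Or.inl (Equiv.swap_apply_of_ne_of_ne ?_ ?_)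
      · exact fun h => hx.1 (hν.injective (h.trans hi.symm))
      · exact fun h => hx.2 (hν.injective (h.trans hj.symm))
  · simpa [hi] using hij

variable {f : Profile A → Matching A}

theorem apply_eq_of_uniquely_acceptable [DecidableEq A] (hIR : IndivRational f)
    (hEff : Efficient f) {P : Profile A} {i j : A} (hij : i ≠ j)
    (hi : ∀ x, (P i).1 x i ↔ x = j) (hj : ∀ x, (P j).1 x j ↔ x = i) : (f P).1 i = j := by
  have hν := (f P).2
  have hνi : (f P).1 i = i ∨ (f P).1 i = j := (hIR P i).imp_right (hi _).1
  have hνj : (f P).1 j = j ∨ (f P).1 j = i := (hIR P j).imp_right (hj _).1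
  refine hνi.resolve_left fun hνi => hEff P ?_
  have hνj : (f P).1 j = j := hνj.resolve_right fun h => hij (by rw [← hνi, ← h, hν j])
  exact exists_dominates_of_single hν hνi hνj ((hi j).2 rfl) ((hj i).2 rfl)

theorem not_isBlockingPair [DecidableEq A] (hIR : IndivRational f) (hGSP : GroupSP f)
    (hEff : Efficient f) (P : Profile A) (i j : A) : ¬ IsBlockingPair P (f P).1 i j := by
  rintro ⟨hij, hi, hj⟩
  let P' : Profile A := fun x =>
    if x = i then Pref.raise (Pref.raise (P i) i) j
    else if x = j then Pref.raise (Pref.raise (P j) j) i else P x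
  have hi' : (f P').1 i = j := by
    refine apply_eq_of_uniquely_acceptable hIR hEff hij (fun x => ?_) (fun x => ?_)
    · simpa [P'] using Pref.raise_raise_rel_iff hij.symm
    · simpa [P', hij.symm] using Pref.raise_raise_rel_iff hij
  have hj' : (f P').1 j = i := by rw [← hi', (f P').2 i]
  refine hGSP ⟨P, P', {i, j}, fun x hx => ?_, ?_, i, Or.inl rfl, hi' ▸ hi⟩
  · simp only [Set.mem_insert_iff, Set.mem_singleton_iff, not_or] at hx
    simp [P', hx.1, hx.2]
  · rintro x (rfl | rfl)
    · exact Or.inr (hi' ▸ hi)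
    · exact Or.inr (hj' ▸ hj)

theorem exists_isBlockingPair_of_cyclic {P : Profile A} {μ : A → A} (hμ : Involutive μ)
    {a b c : A} (hab : a ≠ b) (hac : a ≠ c) (hbc : b ≠ c)
    (ha : (P a).1 b c ∧ (P a).1 c a) (hb : (P b).1 c a ∧ (P b).1 a b)
    (hc : (P c).1 a b ∧ (P c).1 b c) (hμa : μ a = a ∨ μ a = b ∨ μ a = c)
    (hμb : μ b = b ∨ μ b = c ∨ μ b = a) (hμc : μ c = c ∨ μ c = a ∨ μ c = b) :
    ∃ i j, IsBlockingPair P μ i j := by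
  have partner : ∀ {x y}, μ x = y → μ y = x := fun h => h ▸ hμ _
  rcases hμa with h₁ | h₁ | h₁
  · rcases hμb with h₂ | h₂ | h₂
    · exact ⟨a, b, hab, by rw [h₁]; exact (P a).2.trans _ _ _ ha.1 ha.2, by rw [h₂]; exact hb.2⟩
    · exact ⟨c, a, hac.symm, by rw [partner h₂]; exact hc.1, by rw [h₁]; exact ha.2⟩
    · exact absurd (by rw [← partner h₂, h₁]) hab
  · have h₃ : μ c = c := by
      rcases hμc with h₃ | h₃ | h₃
      · exact h₃
      · exact absurd (by rw [← partner h₃, h₁]) hbc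
      · exact absurd (by rw [← partner h₃, partner h₁]) hac
    exact ⟨b, c, hbc, by rw [partner h₁]; exact hb.1, by rw [h₃]; exact hc.2⟩
  · have h₂ : μ b = b := by
      rcases hμb with h₂ | h₂ | h₂
      · exact h₂
      · exact absurd (by rw [← partner h₂, partner h₁]) hab.symm
      · exact absurd (by rw [← partner h₂, h₁]) hbc.symm
    exact ⟨a, b, hab, by rw [h₁]; exact ha.1, by rw [h₂]; exact hb.2⟩

end Matching

section Cyclic

variable {A : Type} [DecidableEq A] {r : Pref A} {a b c : A}

def cyclicProfile (r : Pref A) (a b c : A) : Profile A := fun x =>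
  if x = a then Pref.top3 r b c a
  else if x = b then Pref.top3 r c a b
  else if x = c then Pref.top3 r a b c
  else r

theorem cyclicProfile_apply_left : cyclicProfile r a b c a = Pref.top3 r b c a :=
  if_pos rfl

theorem cyclicProfile_apply_middle (hab : a ≠ b) :
    cyclicProfile r a b c b = Pref.top3 r c a b := by
  simp [cyclicProfile, hab.symm]

theorem cyclicProfile_apply_right (hac : a ≠ c) (hbc : b ≠ c) :
    cyclicProfile r a b c c = Pref.top3 r a b c := by
  simp [cyclicProfile, hac.symm, hbc.symm]

end Cyclic

/-- There is no individually rational, group strategy-proof and efficient one-sided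
matching mechanism for three or more agents. -/
theorem stmt3 {A : Type} [Fintype A] [DecidableEq A] (hA : 3 ≤ Fintype.card A) :
    ¬ ∃ f : Profile A → Matching A, IndivRational f ∧ GroupSP f ∧ Efficient f := by
  rintro ⟨f, hIR, hGSP, hEff⟩
  obtain ⟨a, b, c, hab, hac, hbc⟩ := Fintype.two_lt_card_iff.1 hA
  let r : Pref A := ⟨WellOrderingRel, inferInstance⟩
  let P := cyclicProfile r a b c
  have hPa : P a = Pref.top3 r b c a := cyclicProfile_apply_left
  have hPb : P b = Pref.top3 r c a b := cyclicProfile_apply_middle hab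
  have hPc : P c = Pref.top3 r a b c := cyclicProfile_apply_right hac hbc
  have acceptable : ∀ {x p q}, P x = Pref.top3 r p q x →
      (f P).1 x = x ∨ (f P).1 x = p ∨ (f P).1 x = q := fun hx =>
    (hIR P _).imp_right fun h => Pref.eq_or_eq_of_top3_rel_third (hx ▸ h)
  obtain ⟨i, j, hblock⟩ := exists_isBlockingPair_of_cyclic (P := P) (f P).2 hab hac hbc
    (by rw [hPa]; exact ⟨Pref.top3_rel_first_second hbc.symm, Pref.top3_rel_second_third hab hac⟩)
    (by rw [hPb]; exact ⟨Pref.top3_rel_first_second hac, Pref.top3_rel_second_third hbc hab.symm⟩)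
    (by rw [hPc]
        exact ⟨Pref.top3_rel_first_second hab.symm, Pref.top3_rel_second_third hac.symm hbc.symm⟩)
    (acceptable hPa) (acceptable hPb) (acceptable hPc)
  exact not_isBlockingPair hIR hGSP hEff P i j hblock
end

section
/- If f is a group strategy-proof and efficient one-sided matching mechanism on agent set N, and j ∈ N, then the submechanism f^{-j} for agents N∖{j} — defined by evaluating f at any extension of a profile where j top-ranks being single and all other agents bottom-rank j — is well-defined, group strategy-proof and efficient. -/
/- Submechanisms.  For an agent `j`, a profile for the remaining agents
`{a // a ≠ j}` extends to a profile on all of `A` in which every other agent ranks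
`j` last and `j` ranks themself (staying single) first. -/

/-- `P` is an extension of the reduced profile `Q` (for the agents other than `j`):
`P` agrees with `Q` on partners other than `j`, every agent `i ≠ j` ranks `j` last,
and `j` ranks themself first. -/
def ExtendsAt {A : Type} (j : A) (Q : Profile {a : A // a ≠ j}) (P : Profile A) : Prop :=
  (∀ i a b : {a : A // a ≠ j}, (Q i).1 a b ↔ (P i.1).1 a.1 b.1) ∧
  (∀ i, i ≠ j → ∀ a, a ≠ j → (P i).1 a j) ∧
  (∀ a, a ≠ j → (P j).1 j a)

variable {A : Type}

namespace Pref

lemma asymm_s4 (r : Pref A) {a b : A} (h : r.1 a b) : ¬ r.1 b a :=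
  fun h' => r.2.irrefl a (r.2.trans a b a h h')

lemma not_rel_of_forall_rel {r : Pref A} {j : A} (hj : ∀ a, a ≠ j → r.1 a j) (x : A) :
    ¬ r.1 j x := by
  by_cases hx : x = j
  · exact hx ▸ r.2.irrefl j
  · exact r.asymm_s4 (hj x hx)

lemma eq_of_forall_rel {r r' : Pref A} {j : A} (hr : ∀ a, a ≠ j → r.1 a j)
    (hr' : ∀ a, a ≠ j → r'.1 a j) (h : ∀ a b, a ≠ j → b ≠ j → (r.1 a b ↔ r'.1 a b)) :
    r = r' := by
  refine Subtype.ext (funext₂ fun x y => propext ?_)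
  by_cases hx : x = j
  · subst hx
    exact iff_of_false (not_rel_of_forall_rel hr y) (not_rel_of_forall_rel hr' y)
  by_cases hy : y = j
  · subst hy
    exact iff_of_true (hr x hx) (hr' x hx)
  exact h x y hx hy

def swap (r : Pref A) : Pref A :=
  have := r.2
  ⟨Function.swap r.1, inferInstance⟩

variable [DecidableEq A]

def toSumNe (j : A) (a : A) : {a : A // a ≠ j} ⊕ Unit :=
  if h : a = j then .inr () else .inl ⟨a, h⟩

lemma toSumNe_injective (j : A) : Function.Injective (toSumNe j) := by
  intro a b h
  unfold toSumNe at h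
  split_ifs at h <;> simp_all

def withLast (j : A) (r : Pref {a : A // a ≠ j}) : Pref A :=
  have := r.2
  have : IsStrictTotalOrder _ (Sum.Lex r.1 fun (_ _ : Unit) => False) := {}
  ⟨_, (toSumNe_injective j).isStrictTotalOrder_onFun (r := Sum.Lex r.1 fun _ _ => False)⟩

lemma withLast_rel_iff {j : A} (r : Pref {a : A // a ≠ j}) {a b : A} (ha : a ≠ j) (hb : b ≠ j) :
    (r.withLast j).1 a b ↔ r.1 ⟨a, ha⟩ ⟨b, hb⟩ := by
  simp [withLast, Function.onFun, toSumNe, ha, hb]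

lemma withLast_rel_of_ne {j : A} (r : Pref {a : A // a ≠ j}) {a : A} (ha : a ≠ j) :
    (r.withLast j).1 a j := by
  simp [withLast, Function.onFun, toSumNe, ha]

def withFirst (j : A) : Pref A :=
  (withLast j ⟨WellOrderingRel, inferInstance⟩).swap

lemma withFirst_rel_of_ne {j a : A} (ha : a ≠ j) : (withFirst j).1 j a :=
  withLast_rel_of_ne _ ha

end Pref

section Extension

variable [DecidableEq A]

def extendedProfile (j : A) (Q : Profile {a : A // a ≠ j}) : Profile A :=
  fun i => if h : i = j then Pref.withFirst j else (Q ⟨i, h⟩).withLast j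

lemma extendsAt_extendedProfile (j : A) (Q : Profile {a : A // a ≠ j}) :
    ExtendsAt j Q (extendedProfile j Q) := by
  refine ⟨fun i a b => ?_, fun i hi a ha => ?_, fun a ha => ?_⟩
  · simp only [extendedProfile, dif_neg i.2, Pref.withLast_rel_iff _ a.2 b.2]
  · simp only [extendedProfile, dif_neg hi]
    exact Pref.withLast_rel_of_ne _ ha
  · simp only [extendedProfile, dif_pos]
    exact Pref.withFirst_rel_of_ne ha

end Extension

lemma ExtendsAt.apply_eq {j : A} {Q : Profile {a : A // a ≠ j}} {P P' : Profile A}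
    (h : ExtendsAt j Q P) (h' : ExtendsAt j Q P') (i : A) (hi : i ≠ j) : P' i = P i :=
  Pref.eq_of_forall_rel (h'.2.1 i hi) (h.2.1 i hi) fun a b ha hb =>
    (h'.1 ⟨i, hi⟩ ⟨a, ha⟩ ⟨b, hb⟩).symm.trans (h.1 ⟨i, hi⟩ ⟨a, ha⟩ ⟨b, hb⟩)

namespace Matching

variable [DecidableEq A]

def unpair (μ : Matching A) (j : A) : Matching A :=
  ⟨fun x => if x = j ∨ x = μ.1 j then x else μ.1 x, by
    intro x
    by_cases h : x = j ∨ x = μ.1 j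
    · simp only [if_pos h]
    have h1 : μ.1 x ≠ j := fun e => h (Or.inr (by rw [← e, μ.2]))
    have h2 : μ.1 x ≠ μ.1 j := fun e => h (Or.inl (μ.2.injective e))
    simp only [if_neg h, h1, h2, or_self, if_false, μ.2 x]⟩

def restrictNe (μ : Matching A) (j : A) : Matching {a : A // a ≠ j} :=
  ⟨fun i => if h : μ.1 i = j then i else ⟨μ.1 i, h⟩, by
    intro i
    by_cases h : μ.1 i = j
    · simp only [dif_pos h]
    have h' : μ.1 (μ.1 i) ≠ j := by rw [μ.2]; exact i.2
    dsimp only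
    rw [dif_neg h, dif_neg h']
    exact Subtype.ext (μ.2 i)⟩

lemma restrictNe_apply (μ : Matching A) {j : A} (hj : μ.1 j = j) (i : {a : A // a ≠ j}) :
    ((μ.restrictNe j).1 i).1 = μ.1 i :=
  have h : μ.1 i ≠ j := fun e => i.2 (by rw [← μ.2 i, e, hj])
  by simp only [restrictNe, dif_neg h]

def extendNe {j : A} (μ : Matching {a : A // a ≠ j}) : Matching A :=
  ⟨fun x => if h : x = j then j else (μ.1 ⟨x, h⟩).1, by
    intro x
    by_cases h : x = j
    · subst h
      simp
    simp only [dif_neg h, dif_neg (μ.1 ⟨x, h⟩).2, μ.2 ⟨x, h⟩]⟩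

lemma extendNe_apply_self {j : A} (μ : Matching {a : A // a ≠ j}) : (extendNe μ).1 j = j :=
  dif_pos rfl

lemma extendNe_apply {j : A} (μ : Matching {a : A // a ≠ j}) (i : {a : A // a ≠ j}) :
    (extendNe μ).1 i = (μ.1 i).1 :=
  dif_neg i.2

end Matching

variable {f : Profile A → Matching A}

lemma Efficient.apply_self_of_extendsAt (hE : Efficient f) {j : A} {Q : Profile {a : A // a ≠ j}}
    {P : Profile A} (hP : ExtendsAt j Q P) : (f P).1 j = j := by
  classical
  by_contra hne
  refine hE P ⟨(f P).unpair j, fun k => ?_, j, ?_⟩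
  · by_cases hk : k = j ∨ k = (f P).1 j
    · refine Or.inr ?_
      rcases hk with rfl | rfl
      · simpa [Matching.unpair] using hP.2.2 _ hne
      · simpa [Matching.unpair, (f P).2 j] using hP.2.1 _ hne _ hne
    · exact Or.inl (if_neg hk)
  · simpa [Matching.unpair] using hP.2.2 _ hne

lemma GroupSP.not_rel_of_forall_ne (hG : GroupSP f) {P P' : Profile A} {j : A}
    (hoff : ∀ i, i ≠ j → P' i = P i) (hj : (f P').1 j = (f P).1 j) (i : A) :
    ¬ (P i).1 ((f P').1 i) ((f P).1 i) := by
  intro hi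
  refine hG ⟨P, P', {j, i}, fun k hk => hoff k fun e => hk (Or.inl e), ?_, i, Or.inr rfl, hi⟩
  rintro k (rfl | rfl)
  exacts [Or.inl hj, Or.inr hi]

lemma GroupSP.apply_eq_of_forall_ne (hG : GroupSP f) {P P' : Profile A} {j : A}
    (hoff : ∀ i, i ≠ j → P' i = P i) (hj : (f P').1 j = (f P).1 j) (i : A) :
    (f P').1 i = (f P).1 i := by
  by_cases hi : i = j
  · exact hi ▸ hj
  have hback := hG.not_rel_of_forall_ne (fun k hk => (hoff k hk).symm) hj.symm i
  rw [hoff i hi] at hback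
  exact (P i).2.trichotomous _ _ (hG.not_rel_of_forall_ne hoff hj i) hback

section SubMechanism

variable [DecidableEq A]

def subMechanism (f : Profile A → Matching A) (j : A) :
    Profile {a : A // a ≠ j} → Matching {a : A // a ≠ j} :=
  fun Q => (f (extendedProfile j Q)).restrictNe j

variable {j : A}

lemma subMechanism_apply (hE : Efficient f) (Q : Profile {a : A // a ≠ j}) (i : {a : A // a ≠ j}) :
    ((subMechanism f j Q).1 i).1 = (f (extendedProfile j Q)).1 i :=
  Matching.restrictNe_apply _ (hE.apply_self_of_extendsAt (extendsAt_extendedProfile j Q)) i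

lemma subMechanism_apply_of_extendsAt (hG : GroupSP f) (hE : Efficient f)
    {Q : Profile {a : A // a ≠ j}} {P : Profile A} (hP : ExtendsAt j Q P) (i : {a : A // a ≠ j}) :
    ((subMechanism f j Q).1 i).1 = (f P).1 i := by
  have hQ := extendsAt_extendedProfile j Q
  rw [subMechanism_apply hE]
  refine hG.apply_eq_of_forall_ne (hP.apply_eq hQ) ?_ i
  rw [hE.apply_self_of_extendsAt hQ, hE.apply_self_of_extendsAt hP]

lemma groupSP_subMechanism (hG : GroupSP f) (hE : Efficient f) : GroupSP (subMechanism f j) := by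
  rintro ⟨Q, Q', S, hoff, hweak, i, hiS, hi⟩
  have hQ := extendsAt_extendedProfile j Q
  refine hG ⟨extendedProfile j Q, extendedProfile j Q', Subtype.val '' S, fun k hk => ?_, ?_,
    i, ⟨i, hiS, rfl⟩, ?_⟩
  · by_cases hkj : k = j
    · simp [extendedProfile, hkj]
    · simp only [extendedProfile, dif_neg hkj, hoff ⟨k, hkj⟩ fun hm => hk ⟨_, hm, rfl⟩]
  · rintro _ ⟨k, hkS, rfl⟩
    rw [← subMechanism_apply hE, ← subMechanism_apply hE]
    exact (hweak k hkS).imp (congrArg Subtype.val) (hQ.1 k _ _).mp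
  · rw [← subMechanism_apply hE, ← subMechanism_apply hE]
    exact (hQ.1 i _ _).mp hi

lemma efficient_subMechanism (hE : Efficient f) : Efficient (subMechanism f j) := by
  rintro Q ⟨μ, hdom, i, hi⟩
  have hQ := extendsAt_extendedProfile j Q
  refine hE (extendedProfile j Q) ⟨μ.extendNe, fun k => ?_, i, ?_⟩
  · by_cases hk : k = j
    · subst hk
      exact Or.inl (by rw [Matching.extendNe_apply_self, hE.apply_self_of_extendsAt hQ])
    · rw [show k = (⟨k, hk⟩ : {a : A // a ≠ j}).1 from rfl, Matching.extendNe_apply,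
        ← subMechanism_apply hE]
      exact (hdom ⟨k, hk⟩).imp (congrArg Subtype.val) (hQ.1 _ _ _).mp
  · rw [Matching.extendNe_apply, ← subMechanism_apply hE]
    exact (hQ.1 i _ _).mp hi

end SubMechanism

theorem stmt4_general {A : Type}
    (f : Profile A → Matching A) (hG : GroupSP f) (hE : Efficient f) (j : A) :
    ∃ g : Profile {a : A // a ≠ j} → Matching {a : A // a ≠ j},
      (∀ (Q : Profile {a : A // a ≠ j}) (P : Profile A), ExtendsAt j Q P →
        ∀ i : {a : A // a ≠ j}, ((g Q).1 i).1 = (f P).1 i.1) ∧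
      GroupSP g ∧ Efficient g := by
  classical
  exact ⟨subMechanism f j, fun _ _ hP => subMechanism_apply_of_extendsAt hG hE hP,
    groupSP_subMechanism hG hE, efficient_subMechanism hE⟩

/-- If `f` is group strategy-proof and efficient, then the submechanism `f^{-j}` is
well-defined (there is a mechanism `g` on `A ∖ {j}` whose value depends only on the
reduced profile, agreeing with `f` at every extension), group strategy-proof and
efficient. -/
theorem stmt4 {A : Type} [Fintype A] [DecidableEq A]
    (f : Profile A → Matching A) (hG : GroupSP f) (hE : Efficient f) (j : A) :
    ∃ g : Profile {a : A // a ≠ j} → Matching {a : A // a ≠ j},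
      (∀ (Q : Profile {a : A // a ≠ j}) (P : Profile A), ExtendsAt j Q P →
        ∀ i : {a : A // a ≠ j}, ((g Q).1 i).1 = (f P).1 i.1) ∧
      GroupSP g ∧ Efficient g :=
  stmt4_general f hG hE j
end

section
/- If f is a group strategy-proof efficient one-sided matching mechanism, j an agent, and ≿ a profile at which f leaves j single (f(≿)(j) = j), then f(≿) restricted to N∖{j} agrees with the submechanism f^{-j} applied to the restriction of ≿: f(≿)(i) = f^{-j}(≿)(i) for all i ≠ j. -/
/-- The restriction of a strict preference on `A` to the agents satisfying `p`. -/
def restrictPref {A : Type} (p : A → Prop) (r : Pref A) : Pref {a : A // p a} :=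
  ⟨fun a b => r.1 a.1 b.1, by
    haveI := r.2
    refine { trichotomous := ?_, irrefl := ?_, trans := ?_ }
    · intro a b hab hba
      rcases trichotomous_of r.1 a.1 b.1 with h | h | h
      · exact absurd h hab
      · exact Subtype.ext h
      · exact absurd h hba
    · intro a
      exact irrefl_of r.1 a.1
    · intro a b c hab hbc
      exact trans_of r.1 hab hbc⟩

/-! Replace, one agent at a time, the preference of every `i ≠ j` by one ranking `j` last and
that of `j` by one ranking staying single first. Since nobody is matched to `j`, strategy-proofness
keeps the deviating agent's partner fixed at each step, and non-bossiness (also a consequence of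
group strategy-proofness) then keeps the whole matching fixed. The final profile extends the
restriction of the original one to `A ∖ {j}`, so the submechanism returns the original matching. -/

namespace Pref

variable {A : Type}

def lexKey {B : Type} [LinearOrder B] (key : A → B) (r : Pref A) : Pref A :=
  ⟨Function.onFun (Prod.Lex (· < ·) r.1) fun a => (key a, a),
    have := r.2
    have : IsStrictTotalOrder (B × A) (Prod.Lex (· < ·) r.1) := {}
    Function.Injective.isStrictTotalOrder_onFun _ fun _ _ h => (Prod.ext_iff.1 h).2⟩

theorem lexKey_apply {B : Type} [LinearOrder B] (key : A → B) (r : Pref A) (a b : A) :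
    (lexKey key r).1 a b ↔ key a < key b ∨ key a = key b ∧ r.1 a b :=
  Prod.lex_def (p := (key a, a)) (q := (key b, b))

variable [DecidableEq A] (j : A) (r : Pref A)

def moveBot : Pref A := lexKey (fun a => decide (a = j)) r

def moveTop : Pref A := lexKey (fun a => decide (a ≠ j)) r

variable {j r} {a b : A}

theorem moveBot_apply (ha : a ≠ j) (hb : b ≠ j) : (moveBot j r).1 a b ↔ r.1 a b := by
  simp [moveBot, lexKey_apply, ha, hb]

theorem moveBot_apply_right (ha : a ≠ j) : (moveBot j r).1 a j := by
  simp [moveBot, lexKey_apply, ha]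

theorem topChoice_moveTop : TopChoice (moveTop j r) j := fun c hc => by
  simp [moveTop, lexKey_apply, hc]

end Pref

theorem Function.eq_of_forall_update_eq {ι X Y : Type} [Fintype ι] [DecidableEq ι]
    (F : (ι → X) → Y) (x x' : ι → X)
    (step : ∀ y i, y i = x i → F y = F x → F (Function.update y i (x' i)) = F x) :
    F x' = F x := by
  suffices ∀ s : Finset ι, F (s.piecewise x' x) = F x by simpa using this Finset.univ
  intro s
  induction s using Finset.induction_on with
  | empty => simp
  | insert i s hi ih =>
    rw [Finset.piecewise_insert]
    exact step _ i (Finset.piecewise_eq_of_notMem _ _ _ hi) ih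

namespace GroupSP

variable {A : Type} {f : Profile A → Matching A} (hG : GroupSP f)
  {R R' : Profile A} {i : A}
include hG

theorem not_better_of_unilateral (hd : ∀ k, k ≠ i → R' k = R k) :
    ¬ (R i).1 ((f R').1 i) ((f R).1 i) := fun h =>
  hG ⟨R, R', {i}, hd, fun _ hk => hk ▸ Or.inr h, i, rfl, h⟩

theorem not_better_of_apply_eq (hd : ∀ k, k ≠ i → R' k = R k)
    (hi : (f R').1 i = (f R).1 i) (m : A) : ¬ (R m).1 ((f R').1 m) ((f R).1 m) := fun h =>
  hG ⟨R, R', {m | (R m).1 ((f R').1 m) ((f R).1 m)} ∪ {i},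
    fun k hk => hd k fun hki => hk (Or.inr hki),
    fun _ hk => hk.elim Or.inr fun hki => Or.inl (hki ▸ hi), m, Or.inl h, h⟩

theorem eq_of_apply_eq (hd : ∀ k, k ≠ i → R' k = R k) (hi : (f R').1 i = (f R).1 i) :
    f R' = f R := by
  refine Subtype.ext (funext fun k => ?_)
  have hgain := hG.not_better_of_apply_eq hd hi k
  have hloss := hG.not_better_of_apply_eq (fun k hk => (hd k hk).symm) hi.symm k
  by_cases hki : k = i
  · exact hki ▸ hi
  rw [hd k hki] at hloss
  have := (R k).2
  exact ((trichotomous_of (R k).1 _ _).resolve_left hgain).resolve_right hloss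

theorem apply_eq_of_moveBot [DecidableEq A] {j : A} (hd : ∀ k, k ≠ i → R' k = R k)
    (hR' : R' i = Pref.moveBot j (R i)) (hne : (f R).1 i ≠ j) : (f R').1 i = (f R).1 i := by
  have hgain := hG.not_better_of_unilateral hd
  have hloss := hG.not_better_of_unilateral fun k hk => (hd k hk).symm
  rw [hR'] at hloss
  have hne' : (f R').1 i ≠ j := fun h => hloss (by rw [h]; exact Pref.moveBot_apply_right hne)
  rw [Pref.moveBot_apply hne hne'] at hloss
  have := (R i).2
  exact ((trichotomous_of (R i).1 _ _).resolve_left hgain).resolve_right hloss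

theorem apply_eq_self_of_topChoice (hd : ∀ k, k ≠ i → R' k = R k)
    (hR' : TopChoice (R' i) i) (hi : (f R).1 i = i) : (f R').1 i = i := by
  by_contra h
  exact hG.not_better_of_unilateral (fun k hk => (hd k hk).symm) (by rw [hi]; exact hR' _ h)

end GroupSP

def isolate {A : Type} [DecidableEq A] (j : A) (P : Profile A) : Profile A :=
  fun i => if i = j then Pref.moveTop j (P j) else Pref.moveBot j (P i)

theorem extendsAt_isolate {A : Type} [DecidableEq A] (j : A) (P : Profile A) :
    ExtendsAt j (fun i => restrictPref (· ≠ j) (P i.1)) (isolate j P) := by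
  refine ⟨fun i a b => ?_, fun i hi a ha => ?_, fun a ha => ?_⟩
  · simp [isolate, restrictPref, i.2, Pref.moveBot_apply a.2 b.2]
  · simp [isolate, hi, Pref.moveBot_apply_right ha]
  · simp [isolate, Pref.topChoice_moveTop a ha]

theorem GroupSP.apply_isolate {A : Type} [Fintype A] [DecidableEq A] {f : Profile A → Matching A}
    (hG : GroupSP f) {j : A} {P : Profile A} (hPj : (f P).1 j = j) : f (isolate j P) = f P := by
  refine Function.eq_of_forall_update_eq f P (isolate j P) fun R i hRi hRP => ?_
  have hd : ∀ k, k ≠ i → Function.update R i (isolate j P i) k = R k :=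
    fun k hk => Function.update_of_ne hk _ _
  rw [← hRP]
  refine hG.eq_of_apply_eq hd ?_
  by_cases hij : i = j
  · subst hij
    rw [hRP, hPj]
    exact hG.apply_eq_self_of_topChoice hd (by simp [isolate, Pref.topChoice_moveTop])
      (hRP ▸ hPj)
  · exact hG.apply_eq_of_moveBot hd (by simp [isolate, hij, hRi])
      (hRP ▸ hPj ▸ (f P).2.injective.ne hij)

theorem stmt5_general {A : Type} [Fintype A] [DecidableEq A]
    (f : Profile A → Matching A) (hG : GroupSP f) (j : A)
    (g : Profile {a : A // a ≠ j} → Matching {a : A // a ≠ j})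
    (hg : ∀ (Q : Profile {a : A // a ≠ j}) (P : Profile A), ExtendsAt j Q P →
      ∀ i : {a : A // a ≠ j}, ((g Q).1 i).1 = (f P).1 i.1)
    (P : Profile A) (hPj : (f P).1 j = j) :
    ∀ (i : A) (hi : i ≠ j),
      ((g (fun i => restrictPref (· ≠ j) (P i.1))).1 ⟨i, hi⟩).1 = (f P).1 i := by
  intro i hi
  rw [hg _ _ (extendsAt_isolate j P), hG.apply_isolate hPj]

/-- If `f` is group strategy-proof and efficient and leaves `j` single at `P`, then
`f P` agrees on `A ∖ {j}` with the submechanism `f^{-j}` applied to the restriction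
of `P`. -/
theorem stmt5 {A : Type} [Fintype A] [DecidableEq A]
    (f : Profile A → Matching A) (hG : GroupSP f) (hE : Efficient f) (j : A)
    (g : Profile {a : A // a ≠ j} → Matching {a : A // a ≠ j})
    (hg : ∀ (Q : Profile {a : A // a ≠ j}) (P : Profile A), ExtendsAt j Q P →
      ∀ i : {a : A // a ≠ j}, ((g Q).1 i).1 = (f P).1 i.1)
    (P : Profile A) (hPj : (f P).1 j = j) :
    ∀ (i : A) (hi : i ≠ j),
      ((g (fun i => restrictPref (· ≠ j) (P i.1))).1 ⟨i, hi⟩).1 = (f P).1 i :=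
  stmt5_general f hG j g hg P hPj
end

section
/- For three agents, if f is a group strategy-proof efficient one-sided matching mechanism such that whenever some agent j* top-ranks agent 1 at the two profiles where all agents announce the ranking 1,2,3 or all announce 1,3,2, agent j* is matched to agent 1, then j* owns agent 1: at every profile where j* top-ranks 1, f matches j* with 1. -/
/-- Agent `a` owns agent `b` if whenever `a` top-ranks `b`, `f` matches `a` with `b`,
regardless of the other agents' preferences. -/
def Owns {A : Type} (f : Profile A → Matching A) (a b : A) : Prop :=
  ∀ P : Profile A, TopChoice (P a) b → (f P).1 a = b

/-- The strict preference induced by a position (ranking) permutation `ρ`: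
`a` is preferred to `b` iff `a`'s position `ρ a` is smaller. -/
def prefOfPos {n : ℕ} (ρ : Fin n ≃ Fin n) : Pref (Fin n) :=
  ⟨fun a b => ρ a < ρ b, by
    refine { trichotomous := ?_, irrefl := ?_, trans := ?_ }
    · intro a b hab hba
      exact ρ.injective (le_antisymm (not_lt.mp hba) (not_lt.mp hab))
    · intro a
      exact lt_irrefl _
    · intro a b c hab hbc
      exact lt_trans hab hbc⟩

/-- The profile where every agent announces the ranking `0 ≻ 1 ≻ 2`. -/
def P12 : Profile (Fin 3) := fun _ => prefOfPos (Equiv.refl (Fin 3))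

/-- The profile where every agent announces the ranking `0 ≻ 2 ≻ 1`. -/
def P13 : Profile (Fin 3) := fun _ => prefOfPos (Equiv.swap 1 2)

/-!
Fix two rankings `u`, `u'` with top `0`. Agent `j` is matched with `0` whenever it reports `u`:
otherwise, at such a profile `Q`, the two other agents could jointly misreport their way to `Q`
and gain, starting from one of two anchor profiles where `j` also reports `u` and gets `0`. The
anchors are the uniform profile at `u` and the profile where the others report `u'`; at the
latter `j` gets `0`, since otherwise it would manipulate towards the uniform profile at `u'`.
Strategy-proofness of `j` then extends the conclusion from the report `u` to every report with
top `0`. For `j ≠ 0` the argument needs `u` to rank `j` second and `u'` to rank `j` last.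
-/

open Function

section GroupSP

variable {A : Type} {f : Profile A → Matching A}

theorem GroupSP.false_of_pair_improves (hG : GroupSP f) {P Q : Profile A} {a b : A}
    (hQ : ∀ i, i ≠ a → i ≠ b → Q i = P i)
    (ha : (f Q).1 a = (f P).1 a ∨ (P a).1 ((f Q).1 a) ((f P).1 a))
    (hb : (P b).1 ((f Q).1 b) ((f P).1 b)) : False := by
  refine hG ⟨P, Q, {a, b}, fun i hi => ?_, fun i hi => ?_, b, by simp, hb⟩
  · simp only [Set.mem_insert_iff, Set.mem_singleton_iff, not_or] at hi
    exact hQ i hi.1 hi.2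
  · rcases hi with rfl | rfl
    · exact ha
    · exact Or.inr hb

theorem GroupSP.apply_eq_of_update [DecidableEq A] (hG : GroupSP f) {P : Profile A} {j b : A}
    {s : Pref A} (htop : TopChoice (P j) b) (h : (f (update P j s)).1 j = b) : (f P).1 j = b := by
  by_contra hne
  have hbetter : (P j).1 ((f (update P j s)).1 j) ((f P).1 j) := h ▸ htop _ hne
  exact hG.false_of_pair_improves (a := j) (b := j) (fun i hi _ => update_of_ne hi _ _)
    (Or.inr hbetter) hbetter

theorem GroupSP.owns_of_forall_report [DecidableEq A] (hG : GroupSP f) {j b : A} (u : Pref A)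
    (h : ∀ Q : Profile A, Q j = u → (f Q).1 j = b) : Owns f j b :=
  fun P htop => hG.apply_eq_of_update htop (h _ (update_self j u P))

end GroupSP

section ThreeAgents

variable {x y z : Fin 3}

theorem Fin.eq_or_eq_or_eq_of_ne (hxy : x ≠ y) (hxz : x ≠ z) (hyz : y ≠ z) (w : Fin 3) :
    w = x ∨ w = y ∨ w = z := by
  revert x y z w
  decide

theorem Fin.eq_of_ne_of_ne (hxy : x ≠ y) (hxz : x ≠ z) (hyz : y ≠ z) {w : Fin 3} (hwy : w ≠ y)
    (hwz : w ≠ z) : w = x :=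
  (Fin.eq_or_eq_or_eq_of_ne hxy hxz hyz w).resolve_right (not_or.mpr ⟨hwy, hwz⟩)

theorem Matching.apply_eq_self_of_apply_eq (μ : Matching (Fin 3)) (hxy : x ≠ y) (hxz : x ≠ z)
    (hyz : y ≠ z) (h : μ.1 x = y) : μ.1 z = z := by
  rcases Fin.eq_or_eq_or_eq_of_ne hxy hxz hyz (μ.1 z) with hz | hz | hz
  · exact absurd (h.symm.trans (μ.2.eq_iff.mp hz).symm) hyz
  · exact absurd ((μ.2.eq_iff.mp h).trans (μ.2.eq_iff.mp hz).symm) hxz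
  · exact hz

theorem Matching.apply_cases_of_apply_eq_self (μ : Matching (Fin 3)) (hxy : x ≠ y) (hxz : x ≠ z)
    (hyz : y ≠ z) (h : μ.1 x = x) :
    (μ.1 y = y ∧ μ.1 z = z) ∨ (μ.1 y = z ∧ μ.1 z = y) := by
  have hx : ∀ w, μ.1 w = x → w = x := fun w hw => (μ.2.eq_iff.mp hw).trans h
  rcases Fin.eq_or_eq_or_eq_of_ne hxy hxz hyz (μ.1 y) with hy | hy | hy
  · exact absurd (hx y hy).symm hxy
  · refine Or.inl ⟨hy, ?_⟩
    rcases Fin.eq_or_eq_or_eq_of_ne hxy hxz hyz (μ.1 z) with hz | hz | hz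
    · exact absurd (hx z hz).symm hxz
    · exact absurd ((μ.2.eq_iff.mp hz).trans hy) hyz.symm
    · exact hz
  · exact Or.inr ⟨hy, (μ.2.eq_iff.mp hy).symm⟩

end ThreeAgents

section Anchors

variable {f : Profile (Fin 3) → Matching (Fin 3)} {u u' : Pref (Fin 3)}

theorem GroupSP.owns_zero_of_uniform_of_ne_zero (hG : GroupSP f) {j m : Fin 3} (hj : j ≠ 0)
    (hm : m ≠ 0) (hjm : j ≠ m) (hu : TopChoice u 0) (hujm : u.1 j m) (hu' : TopChoice u' 0)
    (hu'mj : u'.1 m j) (hA : (f fun _ => u).1 j = 0) (hA' : (f fun _ => u').1 j = 0) :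
    Owns f j 0 := by
  set A : Profile (Fin 3) := fun _ => u
  set B : Profile (Fin 3) := update (fun _ => u') j u
  have hB : (f B).1 j = 0 := hG.apply_eq_of_update (s := u') (by simpa [B] using hu)
    (by simpa [B] using hA')
  have hA0 : (f A).1 0 = j := ((f A).2.eq_iff.mp hA).symm
  have hAm : (f A).1 m = m := (f A).apply_eq_self_of_apply_eq hj hjm hm.symm hA
  have hB0 : (f B).1 0 = j := ((f B).2.eq_iff.mp hB).symm
  have hBm : (f B).1 m = m := (f B).apply_eq_self_of_apply_eq hj hjm hm.symm hB
  refine hG.owns_of_forall_report u fun Q hQ => ?_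
  have hQ_of_eq : ∀ P : Profile (Fin 3), P j = u → ∀ i, i ≠ m → i ≠ 0 → Q i = P i :=
    fun P hP i him hi0 => Fin.eq_of_ne_of_ne hj hjm hm.symm hi0 him ▸ hQ.trans hP.symm
  have hQA := hQ_of_eq A rfl
  have hQB := hQ_of_eq B (update_self _ _ _)
  rcases Fin.eq_or_eq_or_eq_of_ne hj.symm hm.symm hjm ((f Q).1 j) with hQj | hQj | hQj
  · exact hQj
  · exfalso
    rcases (f Q).apply_cases_of_apply_eq_self hj hjm hm.symm hQj with ⟨hQ0, hQm⟩ | ⟨hQ0, hQm⟩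
    · refine hG.false_of_pair_improves hQA (Or.inl (hQm.trans hAm.symm)) ?_
      rw [hQ0, hA0]; exact hu j hj
    · refine hG.false_of_pair_improves hQB (Or.inr ?_) ?_
      · rw [hQm, hBm, show B m = u' from update_of_ne hjm.symm _ _]; exact hu' m hm
      · rw [hQ0, hB0, show B 0 = u' from update_of_ne hj.symm _ _]; exact hu'mj
  · exfalso
    have hQ0 : (f Q).1 0 = 0 := (f Q).apply_eq_self_of_apply_eq hjm hj hm hQj
    have hQm : (f Q).1 m = j := ((f Q).2.eq_iff.mp hQj).symm
    refine hG.false_of_pair_improves hQA (Or.inr ?_) ?_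
    · rw [hQm, hAm]; exact hujm
    · rw [hQ0, hA0]; exact hu j hj

theorem GroupSP.apply_zero_ne_of_apply_zero_eq_zero (hG : GroupSP f) {a b : Fin 3} (ha : a ≠ 0)
    (hb : b ≠ 0) (hab : a ≠ b) {P Q : Profile (Fin 3)} (hQP : Q 0 = P 0) (hPb : TopChoice (P b) 0)
    (hPa : (P a).1 a b) (hP : (f P).1 0 = 0) : (f Q).1 0 ≠ b := by
  intro hQ0
  have hQb : (f Q).1 b = 0 := ((f Q).2.eq_iff.mp hQ0).symm
  have hQa : (f Q).1 a = a := (f Q).apply_eq_self_of_apply_eq hb.symm ha.symm hab.symm hQ0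
  have hQP' : ∀ i, i ≠ a → i ≠ b → Q i = P i :=
    fun i hia hib => Fin.eq_of_ne_of_ne ha.symm hb.symm hab hia hib ▸ hQP
  rcases (f P).apply_cases_of_apply_eq_self ha.symm hb.symm hab hP with
    ⟨hPa', hPb'⟩ | ⟨hPa', hPb'⟩
  · refine hG.false_of_pair_improves hQP' (Or.inl (hQa.trans hPa'.symm)) ?_
    rw [hQb, hPb']; exact hPb b hb
  · refine hG.false_of_pair_improves hQP' (Or.inr ?_) ?_
    · rw [hQa, hPa']; exact hPa
    · rw [hQb, hPb']; exact hPb a ha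

theorem GroupSP.zero_owns_zero_of_uniform (hG : GroupSP f) {a b : Fin 3} (ha : a ≠ 0)
    (hb : b ≠ 0) (hab : a ≠ b) (hu : TopChoice u 0) (huab : u.1 a b) (hu' : TopChoice u' 0)
    (hu'ba : u'.1 b a) (hA : (f fun _ => u).1 0 = 0) (hA' : (f fun _ => u').1 0 = 0) :
    Owns f 0 0 := by
  set B : Profile (Fin 3) := update (fun _ => u') 0 u
  have hB : (f B).1 0 = 0 := hG.apply_eq_of_update (s := u') (by simpa [B] using hu)
    (by simpa [B] using hA')
  refine hG.owns_of_forall_report u fun Q hQ => ?_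
  rcases Fin.eq_or_eq_or_eq_of_ne ha.symm hb.symm hab ((f Q).1 0) with hQ0 | hQ0 | hQ0
  · exact hQ0
  · have hBu : B 0 = u := update_self _ _ _
    exact absurd hQ0 (hG.apply_zero_ne_of_apply_zero_eq_zero hb ha hab.symm (hQ.trans hBu.symm)
      (by simpa [B, ha] using hu') (by simpa [B, hb] using hu'ba) hB)
  · exact absurd hQ0 (hG.apply_zero_ne_of_apply_zero_eq_zero ha hb hab hQ hu huab hA)

end Anchors

theorem topChoice_P12 : TopChoice (P12 0) 0 := by
  unfold TopChoice P12 prefOfPos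
  decide

theorem topChoice_P13 : TopChoice (P13 0) 0 := by
  unfold TopChoice P13 prefOfPos
  decide

theorem P12_one_two : (P12 0).1 1 2 := by
  unfold P12 prefOfPos
  decide

theorem P13_two_one : (P13 0).1 2 1 := by
  unfold P13 prefOfPos
  decide

theorem stmt7_general (f : Profile (Fin 3) → Matching (Fin 3))
    (hG : GroupSP f) (j : Fin 3)
    (h1 : (f P12).1 j = 0) (h2 : (f P13).1 j = 0) :
    Owns f j 0 := by
  fin_cases j
  · exact hG.zero_owns_zero_of_uniform (by decide) (by decide) (by decide) topChoice_P12
      P12_one_two topChoice_P13 P13_two_one h1 h2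
  · exact hG.owns_zero_of_uniform_of_ne_zero (by decide) (by decide) (by decide) topChoice_P12
      P12_one_two topChoice_P13 P13_two_one h1 h2
  · exact hG.owns_zero_of_uniform_of_ne_zero (by decide) (by decide) (by decide) topChoice_P13
      P13_two_one topChoice_P12 P12_one_two h2 h1

/-- For three agents: if at both uniform profiles `0 ≻ 1 ≻ 2` and `0 ≻ 2 ≻ 1` a
group strategy-proof efficient `f` matches `j` with agent `0`, then `j` owns `0`. -/
theorem stmt7 (f : Profile (Fin 3) → Matching (Fin 3))
    (hG : GroupSP f) (hE : Efficient f) (j : Fin 3)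
    (h1 : (f P12).1 j = 0) (h2 : (f P13).1 j = 0) :
    Owns f j 0 :=
  stmt7_general f hG j h1 h2
end

section
/- For three agents, there is no group strategy-proof and efficient one-sided matching mechanism under which every agent owns themself, i.e., under which every agent who top-ranks staying single remains single. -/
/-!
A group strategy-proof mechanism under which every agent owns themself is individually
rational: an agent matched to someone worse than staying single would gain by top-ranking
themself. If moreover it is efficient, its outcome has no blocking pair `{j, k}`: were the
pair to report each other first and themselves second, individual rationality and
efficiency force the mechanism to match them together, a joint improvement for both. So the
outcome is always a stable matching. In the cyclic roommate profile, where agent `i` ranks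
`i + 1` first and staying single last, some agent `i` is single in any matching of three
agents, and `i` together with `i - 1`, who ranks `i` first, is a blocking pair.
-/

open Function

namespace Pref

variable {A : Type}

/-- The preference ranking agents by decreasing value of `v`. -/
def ofEmbedding {β : Type*} [LinearOrder β] (v : A ↪ β) : Pref A :=
  ⟨v ⁻¹'o (· > ·), (RelEmbedding.preimage v (· > ·)).isStrictTotalOrder⟩

lemma ofEmbedding_rel_iff {β : Type*} [LinearOrder β] (v : A ↪ β) (x y : A) :
    (ofEmbedding v).1 x y ↔ v y < v x :=
  Iff.rfl

lemma exists_topChoice_and_second (a b : A) :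
    ∃ r : Pref A, TopChoice r a ∧ ∀ c, c ≠ a → c ≠ b → r.1 b c := by
  classical
  let rank : A → ℕ := fun x => if x = a then 2 else if x = b then 1 else 0
  let v : A ↪ ℕ ×ₗ Cardinal.{0} := ⟨fun x => toLex (rank x, embeddingToCardinal x),
    fun x y h => embeddingToCardinal.injective (congrArg (·.2) (toLex.injective h))⟩
  refine ⟨ofEmbedding v, fun c hc => ?_, fun c hca hcb => ?_⟩ <;>
  · rw [ofEmbedding_rel_iff]
    refine Prod.Lex.toLex_lt_toLex.mpr ?_
    left
    simp only [rank]
    split_ifs <;> simp_all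

end Pref

section Mechanism

variable {A : Type} {f : Profile A → Matching A}

def BlockingPair (P : Profile A) (μ : A → A) (j k : A) : Prop :=
  j ≠ k ∧ (P j).1 k (μ j) ∧ (P k).1 j (μ k)

lemma Function.Involutive.swap_apply_of_ne [DecidableEq A] {η : A → A} (hη : Involutive η)
    {j k x : A} (hj : η j = j) (hk : η k = k) (hxj : x ≠ j) (hxk : x ≠ k) :
    Equiv.swap j k (η x) = η x :=
  Equiv.swap_apply_of_ne_of_ne (fun h => hxj (by rw [← hη x, h, hj]))
    (fun h => hxk (by rw [← hη x, h, hk]))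

lemma Function.Involutive.swap_comp [DecidableEq A] {η : A → A} (hη : Involutive η) {j k : A}
    (hj : η j = j) (hk : η k = k) : Involutive (Equiv.swap j k ∘ η) := by
  have hcomm : ∀ x, η (Equiv.swap j k x) = Equiv.swap j k (η x) := by
    intro x
    by_cases hxj : x = j
    · rw [hxj, Equiv.swap_apply_left, hk, hj, Equiv.swap_apply_left]
    by_cases hxk : x = k
    · rw [hxk, Equiv.swap_apply_right, hk, hj, Equiv.swap_apply_right]
    rw [Equiv.swap_apply_of_ne_of_ne hxj hxk, hη.swap_apply_of_ne hj hk hxj hxk]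
  intro x
  rw [comp_apply, comp_apply, hcomm, Equiv.swap_apply_self, hη x]

theorem Efficient.not_single_of_topChoice (hE : Efficient f) (Q : Profile A) {j k : A}
    (hjk : j ≠ k) (hj : TopChoice (Q j) k) (hk : TopChoice (Q k) j) :
    ¬ ((f Q).1 j = j ∧ (f Q).1 k = k) := by
  classical
  rintro ⟨hηj, hηk⟩
  have hinv := (f Q).2
  refine hE Q ⟨⟨Equiv.swap j k ∘ (f Q).1, hinv.swap_comp hηj hηk⟩, fun i => ?_, j, ?_⟩
  · by_cases hij : i = j
    · subst hij
      exact Or.inr (by simpa [hηj] using hj _ hjk)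
    by_cases hik : i = k
    · subst hik
      exact Or.inr (by simpa [hηk] using hk _ hjk.symm)
    exact Or.inl (hinv.swap_apply_of_ne hηj hηk hij hik)
  · simpa [hηj] using hj _ hjk

theorem GroupSP.individually_rational (hG : GroupSP f) (hown : ∀ i, Owns f i i)
    (P : Profile A) (i : A) : ¬ (P i).1 i ((f P).1 i) := by
  classical
  intro hworse
  obtain ⟨s, hs, -⟩ := Pref.exists_topChoice_and_second i i
  have hsingle : (f (update P i s)).1 i = i := hown i _ (by rwa [update_self])
  refine hG ⟨P, update P i s, {i}, fun l hl => update_of_ne hl _ _, ?_, i, rfl, ?_⟩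
  · rintro l rfl
    exact Or.inr (by rwa [hsingle])
  · rwa [hsingle]

theorem GroupSP.not_blockingPair (hG : GroupSP f) (hE : Efficient f)
    (hown : ∀ i, Owns f i i) (P : Profile A) (j k : A) : ¬ BlockingPair P (f P).1 j k := by
  classical
  rintro ⟨hjk, hj, hk⟩
  obtain ⟨rj, rj_top, rj_second⟩ := Pref.exists_topChoice_and_second k j
  obtain ⟨rk, rk_top, rk_second⟩ := Pref.exists_topChoice_and_second j k
  set Q := update (update P j rj) k rk
  have hQj : Q j = rj := by simp [Q, update_of_ne hjk]
  have hQk : Q k = rk := update_self _ _ _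
  have hηj : (f Q).1 j = j ∨ (f Q).1 j = k := by
    by_contra! h
    exact hG.individually_rational hown Q j (hQj ▸ rj_second _ h.2 h.1)
  have hηk : (f Q).1 k = k ∨ (f Q).1 k = j := by
    by_contra! h
    exact hG.individually_rational hown Q k (hQk ▸ rk_second _ h.2 h.1)
  have hmatched : (f Q).1 j = k ∧ (f Q).1 k = j := by
    have hinv := (f Q).2
    rcases hηj with hηj | hηj
    · have hηk' : (f Q).1 k = k :=
        hηk.resolve_right fun h => hjk (by rw [← hηj, ← h, hinv k])
      exact absurd ⟨hηj, hηk'⟩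
        (hE.not_single_of_topChoice Q hjk (hQj ▸ rj_top) (hQk ▸ rk_top))
    · exact ⟨hηj, by rw [← hηj, hinv j]⟩
  refine hG ⟨P, Q, {j, k}, fun i hi => ?_, fun i hi => Or.inr ?_, j, Or.inl rfl, ?_⟩
  · simp only [Set.mem_insert_iff, Set.mem_singleton_iff, not_or] at hi
    simp [Q, update_of_ne hi.1, update_of_ne hi.2]
  · rcases hi with rfl | rfl
    · rwa [hmatched.1]
    · rwa [hmatched.2]
  · rwa [hmatched.1]

end Mechanism

/-- Agent `i` ranks `i + 1` first, `i - 1` second and staying single last. -/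
def roommateProfile : Profile (Fin 3) :=
  fun i => Pref.ofEmbedding (Equiv.subLeft i).toEmbedding

lemma Function.Involutive.exists_fixed_of_odd_card {α : Type*} [Fintype α] {μ : α → α}
    (hμ : Involutive μ) (hodd : Odd (Fintype.card α)) : ∃ a, μ a = a :=
  Equiv.Perm.exists_fixed_point_of_prime (p := 2) (n := 1) (σ := hμ.toPerm μ)
    (by rw [← even_iff_two_dvd, Nat.not_even_iff_odd]; exact hodd) (by ext x; simp [sq, hμ x])

lemma roommateProfile_blockingPair {μ : Fin 3 → Fin 3} (hμ : Involutive μ) {i : Fin 3}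
    (hi : μ i = i) : BlockingPair roommateProfile μ (i - 1) i := by
  have hne : i - 1 ≠ i := (by decide : ∀ i : Fin 3, i - 1 ≠ i) i
  have hpred : μ (i - 1) ≠ i := fun h => hne (by rw [← hμ (i - 1), h, hi])
  refine ⟨hne, ?_, ?_⟩
  · simp only [roommateProfile, Pref.ofEmbedding_rel_iff, Equiv.coe_toEmbedding,
      Equiv.subLeft_apply]
    have htop : ∀ i y : Fin 3, y ≠ i → i - 1 - y < i - 1 - i := by decide
    exact htop i _ hpred
  · simp only [roommateProfile, Pref.ofEmbedding_rel_iff, Equiv.coe_toEmbedding,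
      Equiv.subLeft_apply, hi]
    have hsecond : ∀ i : Fin 3, i - i < i - (i - 1) := by decide
    exact hsecond i

/-- For three agents, no group strategy-proof and efficient mechanism lets every
agent own themself (i.e. every agent who top-ranks staying single stays single). -/
theorem stmt9 (f : Profile (Fin 3) → Matching (Fin 3))
    (hG : GroupSP f) (hE : Efficient f) :
    ¬ ∀ i : Fin 3, Owns f i i := by
  intro hown
  obtain ⟨i, hi⟩ := (f roommateProfile).2.exists_fixed_of_odd_card (by decide)
  exact hG.not_blockingPair hE hown roommateProfile _ _
    (roommateProfile_blockingPair (f roommateProfile).2 hi)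
end

section
/- Consider one-sided matching with four agents and the subdomain of profiles where every agent bottom-ranks staying single. On this subdomain every efficient matching leaves no agent single, there are exactly three perfect matchings, and any group strategy-proof efficient mechanism restricted to this subdomain is a dictatorship (a fixed agent always receives their top-ranked partner). -/
/-- `μ` is efficient at `P`: not Pareto dominated by any matching. -/
def EfficientAt {A : Type} (P : Profile A) (μ : Matching A) : Prop :=
  ¬ ∃ ν : Matching A, dominates P ν.1 μ.1

/-- Profiles where every agent bottom-ranks staying single. -/
def BottomSingle {A : Type} (P : Profile A) : Prop :=
  ∀ i a, a ≠ i → (P i).1 a i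

def Pref.comap {α β : Type} (e : α → β) (he : Function.Injective e) (r : Pref β) : Pref α :=
  ⟨Function.onFun r.1 e, @he.isStrictTotalOrder_onFun _ _ _ _ r.2⟩

lemma Fin.eq_of_ne_of_ne_three {w x y z : Fin 3} (hxy : x ≠ y) (hzx : z ≠ x) (hzy : z ≠ y)
    (hwx : w ≠ x) (hwy : w ≠ y) : w = z := by
  revert w x y z; decide

lemma Fin.exists_ne_ne_three (x y : Fin 3) : ∃ z, z ≠ x ∧ z ≠ y := by
  revert x y; decide

namespace SocialChoice

variable {ι α : Type}

def IsWeakPareto (g : (ι → Pref α) → α) : Prop :=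
  ∀ (Q : ι → Pref α) (x : α), ¬ ∀ i, (Q i).1 x (g Q)

def IsGroupStrategyproof (g : (ι → Pref α) → α) : Prop :=
  ∀ (Q Q' : ι → Pref α) (S : Set ι), (∀ i ∉ S, Q' i = Q i) → S.Nonempty →
    ¬ ∀ i ∈ S, (Q i).1 (g Q') (g Q)

lemma IsGroupStrategyproof.eq_of_forall_prefers {g : (ι → Pref α) → α}
    (hG : IsGroupStrategyproof g) {Q Q' : ι → Pref α} (S : Set ι) (hQ : ∀ i ∉ S, Q' i = Q i)
    (hS : ∀ i ∈ S, (Q i).1 (g Q') (g Q)) : g Q' = g Q := by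
  rcases S.eq_empty_or_nonempty with rfl | hne
  · exact congrArg g (funext fun i => hQ i (Set.notMem_empty i))
  · exact (hG Q Q' S hQ hne hS).elim

open scoped Classical in
noncomputable def patch (Q : ι → Pref α) (S : Set ι) (v : Pref α) : ι → Pref α :=
  S.piecewise (fun _ => v) Q

section patch

variable {Q : ι → Pref α} {S : Set ι} {v : Pref α} {i : ι}

@[simp] lemma patch_of_mem (hi : i ∈ S) : patch Q S v i = v := by
  classical
  simp [patch, hi]

@[simp] lemma patch_of_notMem (hi : i ∉ S) : patch Q S v i = Q i := by
  classical
  simp [patch, hi]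

end patch

def rankOf (x y : Fin 3) (k : Fin 3) : Fin 3 :=
  if x = y then k else if k = x then 0 else if k = y then 1 else 2

lemma rankOf_injective (x y : Fin 3) : Function.Injective (rankOf x y) := by
  revert x y; decide

/-- The ranking of `Fin 3` with `x` first and `y` second (the identity ranking if `x = y`). -/
def rankPref (x y : Fin 3) : Pref (Fin 3) :=
  Pref.comap (rankOf x y) (rankOf_injective x y) ⟨(· < ·), inferInstance⟩

lemma rankPref_first {x y c : Fin 3} (hxy : x ≠ y) (hcx : c ≠ x) : (rankPref x y).1 x c := by
  change rankOf x y x < rankOf x y c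
  revert x y c; decide

lemma rankPref_second {x y c : Fin 3} (hxy : x ≠ y) (hcx : c ≠ x) (hcy : c ≠ y) :
    (rankPref x y).1 y c := by
  change rankOf x y y < rankOf x y c
  revert x y c; decide

lemma rankPref_of_ne_third {x y z c : Fin 3} (hxy : x ≠ y) (hzx : z ≠ x) (hzy : z ≠ y)
    (hcz : c ≠ z) : (rankPref x y).1 c z := by
  change rankOf x y c < rankOf x y z
  revert x y z c; decide

lemma rankPref_apply {x y a b : Fin 3} : (rankPref x y).1 a b ↔ rankOf x y a < rankOf x y b :=
  Iff.rfl

variable {g : (ι → Pref (Fin 3)) → Fin 3}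

noncomputable def twoGroup (S : Set ι) (x y : Fin 3) : ι → Pref (Fin 3) :=
  patch (fun _ => rankPref y x) S (rankPref x y)

@[simp] lemma twoGroup_of_mem {S : Set ι} {i : ι} (hi : i ∈ S) (x y : Fin 3) :
    twoGroup S x y i = rankPref x y :=
  patch_of_mem hi

@[simp] lemma twoGroup_of_notMem {S : Set ι} {i : ι} (hi : i ∉ S) (x y : Fin 3) :
    twoGroup S x y i = rankPref y x :=
  patch_of_notMem hi

lemma twoGroup_compl (S : Set ι) (x y : Fin 3) : twoGroup Sᶜ y x = twoGroup S x y := by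
  funext i
  by_cases hi : i ∈ S <;> simp [hi]

variable (g) in
def WinsContest (S : Set ι) (x y : Fin 3) : Prop := g (twoGroup S x y) = x

variable (g) in
def IsDecisive (S : Set ι) : Prop := ∀ x y, x ≠ y → WinsContest g S x y

lemma winsContest_or (hP : IsWeakPareto g) (S : Set ι) {x y : Fin 3} (hxy : x ≠ y) :
    WinsContest g S x y ∨ g (twoGroup S x y) = y := by
  by_contra! h
  have hx : g (twoGroup S x y) ≠ x := h.1
  refine hP (twoGroup S x y) x fun i => ?_
  by_cases hi : i ∈ S
  · simpa [hi] using rankPref_first hxy hx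
  · simpa [hi] using rankPref_second hxy.symm h.2 hx

lemma not_winsContest_iff (hP : IsWeakPareto g) {S : Set ι} {x y : Fin 3} (hxy : x ≠ y) :
    ¬ WinsContest g S x y ↔ WinsContest g Sᶜ y x := by
  rw [WinsContest, WinsContest, twoGroup_compl]
  exact ⟨(winsContest_or hP S hxy).resolve_left, fun hy hx => hxy (hx.symm.trans hy)⟩

lemma WinsContest.right (hP : IsWeakPareto g) (hG : IsGroupStrategyproof g) {S : Set ι}
    {x y w : Fin 3} (h : WinsContest g S x y) (hxy : x ≠ y) (hwx : w ≠ x) :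
    WinsContest g S x w := by
  rcases eq_or_ne w y with rfl | hwy
  · exact h
  set Q₁ := patch (fun _ => rankPref y w) S (rankPref x y)
  set Q₂ := patch (fun _ => rankPref y w) S (rankPref x w)
  have h₁ : g Q₁ = x := by
    have hw : g Q₁ ≠ w := fun hgw => hP Q₁ y fun i => by
      by_cases hi : i ∈ S
      · simpa [Q₁, hi, hgw] using rankPref_second hxy hwx hwy
      · simpa [Q₁, hi, hgw] using rankPref_first hwy.symm hwy
    have hy : g Q₁ ≠ y := by
      intro hgy
      have := hG.eq_of_forall_prefers (Q := twoGroup S x y) (Q' := Q₁) Sᶜ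
        (fun i hi => by simp_all [Q₁])
        (fun i (hi : i ∉ S) => by
          simpa [hi, hgy, show g (twoGroup S x y) = x from h] using
            rankPref_first hxy.symm hxy)
      exact hxy (h.symm.trans (hgy ▸ this).symm)
    exact Fin.eq_of_ne_of_ne_three hwy hwx.symm hxy hw hy
  have h₂ : g Q₂ = x := by
    by_contra hne
    have := hG.eq_of_forall_prefers (Q := Q₂) (Q' := Q₁) S (fun i hi => by simp [Q₁, Q₂, hi])
      (fun i hi => by simpa [Q₂, hi, h₁] using rankPref_first hwx.symm hne)
    exact hne (this.symm.trans h₁)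
  by_contra hne
  have hw : g (twoGroup S x w) = w := (winsContest_or hP S hwx.symm).resolve_left hne
  have := hG.eq_of_forall_prefers (Q := Q₂) (Q' := twoGroup S x w) Sᶜ
    (fun i hi => by simp_all [Q₂])
    (fun i (hi : i ∉ S) => by
      simpa [Q₂, hi, hw, h₂] using rankPref_second hwy.symm hxy hwx.symm)
  exact hwx (hw.symm.trans (this.trans h₂))

lemma WinsContest.left (hP : IsWeakPareto g) (hG : IsGroupStrategyproof g) {S : Set ι}
    {x y w : Fin 3} (h : WinsContest g S x y) (hxy : x ≠ y) (hwy : w ≠ y) :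
    WinsContest g S w y := by
  by_contra hne
  have hcompl := ((not_winsContest_iff hP hwy).1 hne).right hP hG hwy.symm hxy
  exact (not_winsContest_iff hP hxy).2 hcompl h

lemma WinsContest.isDecisive (hP : IsWeakPareto g) (hG : IsGroupStrategyproof g) {S : Set ι}
    {x y : Fin 3} (h : WinsContest g S x y) (hxy : x ≠ y) : IsDecisive g S := by
  intro x' y' hxy'
  rcases eq_or_ne x' y with rfl | hx'
  · obtain ⟨z, hzx, hzy⟩ := Fin.exists_ne_ne_three x x'
    have hzy' : WinsContest g S x' z := (h.right hP hG hxy hzx).left hP hG hzx.symm hzy.symm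
    exact hzy'.right hP hG hzy.symm hxy'.symm
  · exact (h.left hP hG hxy hx').right hP hG hx' hxy'.symm

lemma isDecisive_univ (hP : IsWeakPareto g) : IsDecisive g (Set.univ : Set ι) := fun x y hxy =>
  (winsContest_or hP _ hxy).resolve_right fun hy =>
    hP (twoGroup Set.univ x y) x fun i => by simpa [hy] using rankPref_first hxy hxy.symm

lemma isDecisive_compl (hP : IsWeakPareto g) (hG : IsGroupStrategyproof g) {S : Set ι}
    (h : ¬ IsDecisive g S) : IsDecisive g Sᶜ := by
  have h01 : ¬ WinsContest g S 0 1 := fun h01 => h (h01.isDecisive hP hG (by decide))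
  exact ((not_winsContest_iff hP (by decide)).1 h01).isDecisive hP hG (by decide)

lemma IsDecisive.nonempty (hP : IsWeakPareto g) {S : Set ι} (h : IsDecisive g S) :
    S.Nonempty := by
  rw [Set.nonempty_iff_ne_empty]
  rintro rfl
  have h01 : g (twoGroup ∅ 0 1) = 0 := h 0 1 (by decide)
  exact hP (twoGroup ∅ 0 1) 1 fun i => by
    simpa [h01] using rankPref_first (by decide) (by decide)

lemma IsDecisive.patch_ne (hG : IsGroupStrategyproof g) {S : Set ι}
    (h : IsDecisive g S) (Q : ι → Pref (Fin 3)) {x y : Fin 3} (hxy : x ≠ y) :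
    g (patch Q S (rankPref x y)) ≠ y := by
  intro hy
  set R := patch Q S (rankPref x y)
  have := hG.eq_of_forall_prefers (Q := twoGroup S x y) (Q' := R) Sᶜ
    (fun i hi => by simp_all [R])
    (fun i (hi : i ∉ S) => by
      simpa [hi, hy, show g (twoGroup S x y) = x from h x y hxy] using
        rankPref_first hxy.symm hxy)
  exact hxy ((h x y hxy).symm.trans (this.symm.trans hy))

lemma IsDecisive.patch_eq (hG : IsGroupStrategyproof g) {S : Set ι}
    (h : IsDecisive g S) (Q : ι → Pref (Fin 3)) {x y : Fin 3} (hxy : x ≠ y) :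
    g (patch Q S (rankPref x y)) = x := by
  obtain ⟨z, hzx, hzy⟩ := Fin.exists_ne_ne_three x y
  by_contra hx
  have hz := Fin.eq_of_ne_of_ne_three hxy hzx hzy hx (h.patch_ne hG Q hxy)
  have hz' := h.patch_ne hG Q hzx.symm
  have := hG.eq_of_forall_prefers (Q := patch Q S (rankPref x y))
    (Q' := patch Q S (rankPref x z)) S (fun i hi => by simp [hi])
    (fun i hi => by simpa [hi, hz] using rankPref_of_ne_third hxy hzx hzy hz')
  exact hz' (this.trans hz)

lemma IsDecisive.not_forall_prefers (hP : IsWeakPareto g) (hG : IsGroupStrategyproof g)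
    {S : Set ι} (h : IsDecisive g S) (Q : ι → Pref (Fin 3)) (x : Fin 3) :
    ¬ ∀ i ∈ S, (Q i).1 x (g Q) := by
  intro hx
  obtain ⟨y, hyx⟩ := exists_ne x
  have hpatch := h.patch_eq hG Q hyx.symm
  have hgQ := hG.eq_of_forall_prefers (Q := Q) (Q' := patch Q S (rankPref x y)) S
    (fun i hi => by simp [hi]) (fun i hi => by simpa [hpatch] using hx i hi)
  obtain ⟨i, hi⟩ := h.nonempty hP
  have := (Q i).2
  exact irrefl x (hpatch ▸ hgQ ▸ hx i hi)

open scoped Classical in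
/-- Members of `S₁` rank `0 ≻ 1`, members of `S₂` rank `1 ≻ 2` and members of `S₃` rank `2 ≻ 0`,
provided no voter lies in all three coalitions. -/
noncomputable def condorcetProfile (S₁ S₃ : Set ι) : ι → Pref (Fin 3) := fun i =>
  if i ∉ S₃ then rankPref 0 1 else if i ∉ S₁ then rankPref 1 2 else rankPref 2 0

lemma IsDecisive.inter_inter_nonempty (hP : IsWeakPareto g) (hG : IsGroupStrategyproof g)
    {S₁ S₂ S₃ : Set ι} (h₁ : IsDecisive g S₁) (h₂ : IsDecisive g S₂) (h₃ : IsDecisive g S₃) :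
    (S₁ ∩ S₂ ∩ S₃).Nonempty := by
  by_contra! hempty
  set Q := condorcetProfile (ι := ι) S₁ S₃
  have hQ₁ : ∀ i ∈ S₁, (Q i).1 0 1 := fun i hi => by
    by_cases hi₃ : i ∈ S₃ <;> simp [Q, condorcetProfile, hi, hi₃, rankPref_apply, rankOf]
  have hQ₂ : ∀ i ∈ S₂, (Q i).1 1 2 := fun i hi => by
    by_cases hi₃ : i ∈ S₃
    · have hi₁ : i ∉ S₁ := fun hi₁ => hempty.subset ⟨⟨hi₁, hi⟩, hi₃⟩
      simp [Q, condorcetProfile, hi₁, hi₃, rankPref_apply, rankOf]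
    · simp [Q, condorcetProfile, hi₃, rankPref_apply, rankOf]
  have hQ₃ : ∀ i ∈ S₃, (Q i).1 2 0 := fun i hi => by
    by_cases hi₁ : i ∈ S₁ <;> simp [Q, condorcetProfile, hi, hi₁, rankPref_apply, rankOf]
  obtain h | h | h : g Q = 0 ∨ g Q = 1 ∨ g Q = 2 := by omega
  · exact h₃.not_forall_prefers hP hG Q 2 (h ▸ hQ₃)
  · exact h₁.not_forall_prefers hP hG Q 0 (h ▸ hQ₁)
  · exact h₂.not_forall_prefers hP hG Q 1 (h ▸ hQ₂)

lemma IsDecisive.inter (hP : IsWeakPareto g) (hG : IsGroupStrategyproof g) {S T : Set ι}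
    (hS : IsDecisive g S) (hT : IsDecisive g T) : IsDecisive g (S ∩ T) := by
  by_contra h
  obtain ⟨i, hi, hi'⟩ := hS.inter_inter_nonempty hP hG hT (isDecisive_compl hP hG h)
  exact hi' hi

noncomputable def decisiveUltrafilter (hP : IsWeakPareto g) (hG : IsGroupStrategyproof g) :
    Ultrafilter ι :=
  Ultrafilter.ofComplNotMemIff
    { sets := {S | IsDecisive g S}
      univ_sets := isDecisive_univ hP
      sets_of_superset := fun {S T} hS hST => by
        by_contra hT
        obtain ⟨i, ⟨hiS, hiT⟩, -⟩ :=
          hS.inter_inter_nonempty hP hG (isDecisive_compl hP hG hT) (isDecisive_univ hP)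
        exact hiT (hST hiS)
      inter_sets := fun hS hT => hS.inter hP hG hT }
    fun S => ⟨fun h => compl_compl S ▸ isDecisive_compl hP hG h, fun hS hSc => by
      obtain ⟨i, ⟨hi, hi'⟩, -⟩ := hS.inter_inter_nonempty hP hG hSc (isDecisive_univ hP)
      exact hi' hi⟩

theorem exists_dictator [Finite ι] (hP : IsWeakPareto g) (hG : IsGroupStrategyproof g) :
    ∃ i, ∀ Q, TopChoice (Q i) (g Q) := by
  obtain ⟨i, hi⟩ := (decisiveUltrafilter hP hG).eq_pure_of_finite
  have hdec : IsDecisive g {i} := by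
    change {i} ∈ decisiveUltrafilter hP hG
    simp [hi]
  refine ⟨i, fun Q c hc => ?_⟩
  have := (Q i).2
  rcases trichotomous_of (Q i).1 (g Q) c with h | rfl | h
  · exact h
  · exact absurd rfl hc
  · exact absurd (fun j (hj : j = i) => hj ▸ h) (hdec.not_forall_prefers hP hG Q c)

end SocialChoice

lemma Function.Involutive.swap_comp_s10 {A : Type} [DecidableEq A] {μ : A → A}
    (hμ : Function.Involutive μ) {a b : A} (ha : μ a = a) (hb : μ b = b) :
    Function.Involutive (Equiv.swap a b ∘ μ) := by
  intro x
  rcases eq_or_ne x a with rfl | hxa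
  · simp [ha, hb]
  rcases eq_or_ne x b with rfl | hxb
  · simp [ha, hb]
  have hμa : μ x ≠ a := fun h => hxa (hμ.injective (h.trans ha.symm))
  have hμb : μ x ≠ b := fun h => hxb (hμ.injective (h.trans hb.symm))
  simp [Equiv.swap_apply_of_ne_of_ne, hxa, hxb, hμa, hμb, hμ x]

lemma not_efficientAt_of_two_singles {A : Type} [DecidableEq A] {P : Profile A}
    (hP : BottomSingle P) {μ : Matching A} {a b : A} (hab : a ≠ b) (ha : μ.1 a = a)
    (hb : μ.1 b = b) : ¬ EfficientAt P μ := by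
  refine fun hμ => hμ ⟨⟨Equiv.swap a b ∘ μ.1, μ.2.swap_comp_s10 ha hb⟩, fun i => ?_, a, ?_⟩
  · rcases eq_or_ne i a with rfl | hia
    · simpa [ha] using Or.inr (hP i b hab.symm)
    rcases eq_or_ne i b with rfl | hib
    · simpa [hb] using Or.inr (hP i a hab)
    refine Or.inl (Equiv.swap_apply_of_ne_of_ne ?_ ?_)
    exacts [fun h => hia (μ.2.injective (h.trans ha.symm)),
      fun h => hib (μ.2.injective (h.trans hb.symm))]
  · simpa [ha] using hP a b hab.symm

def perfectMatching : Fin 3 → Fin 4 → Fin 4 := ![![1, 0, 3, 2], ![2, 3, 0, 1], ![3, 2, 1, 0]]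

/-- The index of the perfect matching pairing `i` with `a` (junk `2` when `a = i`). -/
def partnerIndex (i a : Fin 4) : Fin 3 :=
  if a = perfectMatching 0 i then 0 else if a = perfectMatching 1 i then 1 else 2

lemma perfectMatching_involutive (k : Fin 3) : Function.Involutive (perfectMatching k) := by
  intro i
  revert k i; decide

lemma perfectMatching_ne (k : Fin 3) (i : Fin 4) : perfectMatching k i ≠ i := by
  revert k i; decide

lemma partnerIndex_perfectMatching (i : Fin 4) (k : Fin 3) :
    partnerIndex i (perfectMatching k i) = k := by
  revert i k; decide

lemma perfectMatching_partnerIndex {i a : Fin 4} (h : a ≠ i) :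
    perfectMatching (partnerIndex i a) i = a := by
  revert i a; decide

lemma perfectMatching_left_injective (i : Fin 4) :
    Function.Injective (perfectMatching · i) :=
  Function.LeftInverse.injective (partnerIndex_perfectMatching i)

set_option maxRecDepth 10000 in
lemma eq_perfectMatching_of_forall_ne {m : Fin 4 → Fin 4} (hm : Function.Involutive m)
    (h : ∀ a, m a ≠ a) : m = perfectMatching (partnerIndex 0 (m 0)) := by
  have key : ∀ m : Fin 4 → Fin 4, (∀ x, m (m x) = x) → (∀ a, m a ≠ a) →
      m = perfectMatching (partnerIndex 0 (m 0)) := by decide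
  exact key m hm h

set_option maxRecDepth 10000 in
lemma exists_ne_apply_eq_self_of_apply_eq_self {m : Fin 4 → Fin 4}
    (hm : Function.Involutive m) {a : Fin 4} (ha : m a = a) : ∃ b, b ≠ a ∧ m b = b := by
  have key : ∀ (m : Fin 4 → Fin 4) (a : Fin 4), (∀ x, m (m x) = x) → m a = a →
      ∃ b, b ≠ a ∧ m b = b := by decide
  exact key m a hm ha

lemma forall_apply_ne_of_efficientAt {P : Profile (Fin 4)} (hP : BottomSingle P)
    {μ : Matching (Fin 4)} (hμ : EfficientAt P μ) (a : Fin 4) : μ.1 a ≠ a := fun ha =>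
  let ⟨_, hba, hb⟩ := exists_ne_apply_eq_self_of_apply_eq_self μ.2 ha
  not_efficientAt_of_two_singles hP hba.symm ha hb hμ

lemma card_perfect_matchings : Nat.card {μ : Matching (Fin 4) // ∀ a, μ.1 a ≠ a} = 3 := by
  let e : Fin 3 → {μ : Matching (Fin 4) // ∀ a, μ.1 a ≠ a} := fun k =>
    ⟨⟨perfectMatching k, perfectMatching_involutive k⟩, perfectMatching_ne k⟩
  have he : Function.Bijective e := by
    refine ⟨fun k k' h => perfectMatching_left_injective 0 ?_, fun μ => ?_⟩
    · exact congrFun (congrArg (fun μ => μ.1.1) h) 0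
    · exact ⟨_, Subtype.ext (Subtype.ext (eq_perfectMatching_of_forall_ne μ.1.2 μ.2).symm)⟩
  rw [← Nat.card_eq_of_bijective e he, Nat.card_fin]

open SocialChoice

/-- Agent `i`'s ranking of the three perfect matchings, by the partner each assigns to `i`. -/
def inducedPref (i : Fin 4) (r : Pref (Fin 4)) : Pref (Fin 3) :=
  Pref.comap (perfectMatching · i) (perfectMatching_left_injective i) r

lemma lexKey_injective (i : Fin 4) :
    Function.Injective fun a : Fin 4 => (decide (a = i), partnerIndex i a) := by
  revert i; decide

/-- The preference of agent `i` that ranks partners as `r` ranks the matchings pairing `i` with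
them, and staying single last. -/
def liftPref (i : Fin 4) (r : Pref (Fin 3)) : Pref (Fin 4) :=
  Pref.comap _ (lexKey_injective i) ⟨Prod.Lex (· < ·) r.1, haveI := r.2; { }⟩

lemma liftPref_apply_perfectMatching {i : Fin 4} {r : Pref (Fin 3)} {k k' : Fin 3} :
    (liftPref i r).1 (perfectMatching k i) (perfectMatching k' i) ↔ r.1 k k' := by
  simp [liftPref, Pref.comap, Function.onFun, Prod.lex_def, perfectMatching_ne,
    partnerIndex_perfectMatching]

lemma liftPref_apply_self {i a : Fin 4} {r : Pref (Fin 3)} (ha : a ≠ i) :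
    (liftPref i r).1 a i := by
  simp [liftPref, Pref.comap, Function.onFun, Prod.lex_def, ha]

lemma liftPref_inducedPref {i : Fin 4} {r : Pref (Fin 4)} (hr : ∀ a, a ≠ i → r.1 a i) :
    liftPref i (inducedPref i r) = r := by
  have := r.2
  have := (liftPref i (inducedPref i r)).2
  refine Subtype.ext (funext₂ fun a b => propext ?_)
  rcases eq_or_ne a i with rfl | ha
  · rcases eq_or_ne b a with rfl | hb
    · exact iff_of_false (irrefl _) (irrefl _)
    · exact iff_of_false (asymm (liftPref_apply_self hb)) (asymm (hr b hb))
  · rcases eq_or_ne b i with rfl | hb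
    · exact iff_of_true (liftPref_apply_self ha) (hr a ha)
    · rw [← perfectMatching_partnerIndex ha, ← perfectMatching_partnerIndex hb,
        liftPref_apply_perfectMatching]
      rfl

lemma TopChoice.liftPref {i : Fin 4} {r : Pref (Fin 3)} {k : Fin 3} (h : TopChoice r k) :
    TopChoice (liftPref i r) (perfectMatching k i) := by
  intro c hc
  rcases eq_or_ne c i with rfl | hci
  · exact liftPref_apply_self (perfectMatching_ne k c)
  · rw [← perfectMatching_partnerIndex hci, liftPref_apply_perfectMatching]
    exact h _ fun h' => hc (by rw [← h', perfectMatching_partnerIndex hci])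

def liftProfile (Q : Fin 4 → Pref (Fin 3)) : Profile (Fin 4) := fun i => liftPref i (Q i)

def inducedProfile (P : Profile (Fin 4)) : Fin 4 → Pref (Fin 3) := fun i => inducedPref i (P i)

lemma bottomSingle_liftProfile (Q : Fin 4 → Pref (Fin 3)) : BottomSingle (liftProfile Q) :=
  fun _ _ ha => liftPref_apply_self ha

lemma liftProfile_inducedProfile {P : Profile (Fin 4)} (hP : BottomSingle P) :
    liftProfile (inducedProfile P) = P :=
  funext fun i => liftPref_inducedPref (hP i)

section matchingRule

variable {f : Profile (Fin 4) → Matching (Fin 4)}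

variable (f) in
/-- The rule choosing among the three perfect matchings that `f` induces on bottom-single
profiles. -/
def matchingRule (Q : Fin 4 → Pref (Fin 3)) : Fin 3 := partnerIndex 0 ((f (liftProfile Q)).1 0)

lemma apply_liftProfile (hE : Efficient f) (Q : Fin 4 → Pref (Fin 3)) :
    (f (liftProfile Q)).1 = perfectMatching (matchingRule f Q) :=
  eq_perfectMatching_of_forall_ne (f _).2
    (forall_apply_ne_of_efficientAt (bottomSingle_liftProfile Q) (hE _))

lemma isWeakPareto_matchingRule (hE : Efficient f) : IsWeakPareto (matchingRule f) := by
  intro Q k hk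
  refine hE (liftProfile Q)
    ⟨⟨perfectMatching k, perfectMatching_involutive k⟩, fun i => Or.inr ?_, 0, ?_⟩ <;>
  · rw [apply_liftProfile hE Q]
    exact liftPref_apply_perfectMatching.2 (hk _)

lemma isGroupStrategyproof_matchingRule (hG : GroupSP f) (hE : Efficient f) :
    IsGroupStrategyproof (matchingRule f) := by
  intro Q Q' S hQ ⟨j, hj⟩ hS
  refine hG ⟨liftProfile Q, liftProfile Q', S, fun i hi => congrArg (liftPref i) (hQ i hi),
    fun i hi => Or.inr ?_, j, hj, ?_⟩ <;>
  · rw [apply_liftProfile hE, apply_liftProfile hE]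
    exact liftPref_apply_perfectMatching.2 (hS _ ‹_›)

end matchingRule

/-- Four agents, on the subdomain where everyone bottom-ranks being single:
every efficient matching is perfect (no singles), there are exactly three perfect
matchings, and any group strategy-proof efficient mechanism is a dictatorship on
this subdomain. -/
theorem stmt10 (f : Profile (Fin 4) → Matching (Fin 4))
    (hG : GroupSP f) (hE : Efficient f) :
    (∀ P : Profile (Fin 4), BottomSingle P →
      ∀ μ : Matching (Fin 4), EfficientAt P μ → ∀ a, μ.1 a ≠ a) ∧
    Nat.card {μ : Matching (Fin 4) // ∀ a, μ.1 a ≠ a} = 3 ∧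
    (∃ i : Fin 4, ∀ P : Profile (Fin 4), BottomSingle P → TopChoice (P i) ((f P).1 i)) := by
  refine ⟨fun P hP μ hμ => forall_apply_ne_of_efficientAt hP hμ, card_perfect_matchings, ?_⟩
  obtain ⟨i, hi⟩ :=
    exists_dictator (isWeakPareto_matchingRule hE) (isGroupStrategyproof_matchingRule hG hE)
  refine ⟨i, fun P hP => ?_⟩
  rw [← liftProfile_inducedProfile hP, apply_liftProfile hE]
  exact (hi _).liftPref
end

section
/- For any gender-neutral two-sided matching mechanism f with symmetry σ(m_i) = w_i, the induced one-sided mechanism g is group strategy-proof whenever f is group strategy-proof. -/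
abbrev Profile2 (n : ℕ) := (Fin n → Pref (Fin n)) × (Fin n → Pref (Fin n))
abbrev Mechanism2 (n : ℕ) := Profile2 n → (Fin n ≃ Fin n)

/-- Weak gender-neutrality with respect to σ(m_i) = w_i: reflecting the profile
reflects the outcome. -/
def WeaklyGN {n : ℕ} (f : Mechanism2 n) : Prop :=
  ∀ P : Profile2 n, f (P.2, P.1) = (f P).symm

/-- `ν` Pareto dominates `μ` at the two-sided profile `P`. -/
def dominates2 {n : ℕ} (P : Profile2 n) (ν μ : Fin n ≃ Fin n) : Prop :=
  (∀ i, ν i = μ i ∨ (P.1 i).1 (ν i) (μ i)) ∧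
  (∀ j, ν.symm j = μ.symm j ∨ (P.2 j).1 (ν.symm j) (μ.symm j)) ∧
  ((∃ i, (P.1 i).1 (ν i) (μ i)) ∨ (∃ j, (P.2 j).1 (ν.symm j) (μ.symm j)))

/-- Two-sided efficiency. -/
def Efficient2 {n : ℕ} (f : Mechanism2 n) : Prop :=
  ∀ P, ¬ ∃ ν : Fin n ≃ Fin n, dominates2 P ν (f P)

/-- Two-sided group strategy-proofness: no coalition (of men `Sm` and women `Sw`)
has a misreport making all members weakly better off and some member strictly. -/
def GroupSP2 {n : ℕ} (f : Mechanism2 n) : Prop :=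
  ¬ ∃ (P P' : Profile2 n) (Sm Sw : Set (Fin n)),
      (∀ i, i ∉ Sm → P'.1 i = P.1 i) ∧ (∀ j, j ∉ Sw → P'.2 j = P.2 j) ∧
      (∀ i ∈ Sm, f P' i = f P i ∨ (P.1 i).1 (f P' i) (f P i)) ∧
      (∀ j ∈ Sw, (f P').symm j = (f P).symm j ∨ (P.2 j).1 ((f P').symm j) ((f P).symm j)) ∧
      ((∃ i ∈ Sm, (P.1 i).1 (f P' i) (f P i)) ∨
        (∃ j ∈ Sw, (P.2 j).1 ((f P').symm j) ((f P).symm j)))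

theorem WeaklyGN.symm_apply_diag {n : ℕ} {f : Mechanism2 n} (hgn : WeaklyGN f)
    (Q : Fin n → Pref (Fin n)) (j : Fin n) : (f (Q, Q)).symm j = f (Q, Q) j := by
  rw [← hgn (Q, Q)]

/-- If `f` is weakly gender-neutral and group strategy-proof, the induced one-sided
mechanism `g Q := (j ↦ f (Q, Q) j)` is group strategy-proof: no coalition `S` of
indices has a profitable joint misreport. -/
theorem stmt12 {n : ℕ} (f : Mechanism2 n) (hgn : WeaklyGN f) (hG : GroupSP2 f) :
    ¬ ∃ (Q Q' : Fin n → Pref (Fin n)) (S : Set (Fin n)),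
        (∀ j, j ∉ S → Q' j = Q j) ∧
        (∀ j ∈ S, f (Q', Q') j = f (Q, Q) j ∨ (Q j).1 (f (Q', Q') j) (f (Q, Q) j)) ∧
        (∃ j ∈ S, (Q j).1 (f (Q', Q') j) (f (Q, Q) j)) := by
  rintro ⟨Q, Q', S, hout, hweak, j, hj, hstrict⟩
  -- the coalition of the men and the women indexed by `S` deviates from `(Q, Q)` to `(Q', Q')`
  refine hG ⟨(Q, Q), (Q', Q'), S, S, hout, hout, hweak, fun i hi => ?_, Or.inl ⟨j, hj, hstrict⟩⟩
  rw [hgn.symm_apply_diag, hgn.symm_apply_diag]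
  exact hweak i hi
end

section
/- No stable two-sided matching mechanism for three or more couples is weakly gender-neutral: for any symmetry σ there exists a symmetric preference profile at which no stable matching is symmetric. -/
/-- `μ` is stable at `P`: there is no blocking pair `(m_i, w_j)` with
`w_j ≻_{m_i} μ(m_i)` and `m_i ≻_{w_j} μ(w_j)`. -/
def Stable {n : ℕ} (P : Profile2 n) (μ : Fin n ≃ Fin n) : Prop :=
  ¬ ∃ i j, (P.1 i).1 j (μ i) ∧ (P.2 j).1 i (μ.symm j)

/-! At a profile that is its own reflection, weak gender-neutrality forces the outcome `μ` to
equal its reflection `μ.symm`, i.e. to pair the agents off symmetrically. The witness profile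
gives the first three couples cyclic preferences (everyone ranks `i - 1`, then `i - 2`, then
`i`, indices mod 3) and lets every further agent rank its namesake first. Stability fixes the
further agents, so `μ` restricts to an involution of the three cyclic couples, and each of the
four involutions of `Fin 3` is blocked. -/

section Matching

variable {n : ℕ}

theorem symm_eq_of_weaklyGN {f : Mechanism2 n} (hf : WeaklyGN f) (Q : Fin n → Pref (Fin n)) :
    (f (Q, Q)).symm = f (Q, Q) :=
  (hf (Q, Q)).symm

theorem Stable.apply_eq_self_of_mutual_top {P : Profile2 n} {μ : Fin n ≃ Fin n}
    (hμ : Stable P μ) {i : Fin n} (hm : ∀ j ≠ i, (P.1 i).1 i j) (hw : ∀ k ≠ i, (P.2 i).1 i k) :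
    μ i = i := by
  by_contra h
  have h' : μ.symm i ≠ i := fun h' => h (μ.symm_apply_eq.mp h').symm
  exact hμ ⟨i, i, hm _ h, hw _ h'⟩

end Matching

theorem Equiv.Perm.apply_lt_of_forall_le_apply_eq {n m : ℕ} {μ : Equiv.Perm (Fin n)}
    (hfix : ∀ k : Fin n, m ≤ k.val → μ k = k) {i : Fin n} (hi : i.val < m) : (μ i).val < m := by
  by_contra h
  have : μ (μ i) = μ i := hfix _ (not_lt.mp h)
  rw [μ.injective this] at h
  exact h hi

theorem exists_cyclic_blocking_pair (s : Fin 3 → Fin 3) (hs : ∀ i, s (s i) = i) :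
    ∃ i j : Fin 3, (i.val + 2 - j.val) % 3 < (i.val + 2 - (s i).val) % 3 ∧
      (j.val + 2 - i.val) % 3 < (j.val + 2 - (s j).val) % 3 := by
  revert s
  decide

section Witness

variable {n : ℕ}

-- `0` is the best rank.
def witnessRank (i j : Fin n) : ℕ :=
  if i.val < 3 ∧ j.val < 3 then (i.val + 2 - j.val) % 3
  else if j = i then 0 else j.val + 3

theorem witnessRank_injective (i : Fin n) : Function.Injective (witnessRank i) := by
  intro a b h
  unfold witnessRank at h
  split_ifs at h <;> exact Fin.ext (by omega)

def witnessPref (i : Fin n) : Pref (Fin n) :=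
  ⟨fun a b => witnessRank i a < witnessRank i b,
   { irrefl := fun _ => lt_irrefl _
     trans := fun _ _ _ => Nat.lt_trans
     trichotomous := fun _ _ hab hba =>
       witnessRank_injective i (le_antisymm (not_lt.mp hba) (not_lt.mp hab)) }⟩

theorem witnessPref_self {i : Fin n} (hi : 3 ≤ i.val) {j : Fin n} (hj : j ≠ i) :
    (witnessPref i).1 i j := by
  change witnessRank i i < witnessRank i j
  unfold witnessRank
  rw [if_neg (by omega), if_pos rfl, if_neg (by omega), if_neg hj]
  omega

theorem witnessRank_castLE (hn : 3 ≤ n) (a b : Fin 3) :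
    witnessRank (Fin.castLE hn a) (Fin.castLE hn b) = (a.val + 2 - b.val) % 3 :=
  if_pos ⟨a.isLt, b.isLt⟩

theorem not_stable_witness_of_symm_eq (hn : 3 ≤ n) {μ : Fin n ≃ Fin n} (hsymm : μ.symm = μ) :
    ¬ Stable (witnessPref, witnessPref) μ := by
  intro hμ
  have hfix : ∀ k : Fin n, 3 ≤ k.val → μ k = k := fun k hk =>
    hμ.apply_eq_self_of_mutual_top (fun _ => witnessPref_self hk) (fun _ => witnessPref_self hk)
  let s : Fin 3 → Fin 3 := fun a =>
    ⟨(μ (Fin.castLE hn a)).val, Equiv.Perm.apply_lt_of_forall_le_apply_eq hfix a.isLt⟩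
  have hs_castLE (a : Fin 3) : Fin.castLE hn (s a) = μ (Fin.castLE hn a) := rfl
  have hinv (x : Fin n) : μ (μ x) = x := by
    have h := μ.symm_apply_apply x
    rwa [hsymm] at h
  have hs (a : Fin 3) : s (s a) = a :=
    Fin.castLE_injective hn (by rw [hs_castLE, hs_castLE, hinv])
  obtain ⟨a, b, hab, hba⟩ := exists_cyclic_blocking_pair s hs
  refine hμ ⟨Fin.castLE hn a, Fin.castLE hn b, ?_, ?_⟩
  · change witnessRank _ _ < witnessRank _ _
    rwa [← hs_castLE, witnessRank_castLE, witnessRank_castLE]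
  · change witnessRank _ _ < witnessRank _ (μ.symm _)
    rwa [hsymm, ← hs_castLE, witnessRank_castLE, witnessRank_castLE]

end Witness

/-- No stable two-sided matching mechanism for three or more couples is weakly
gender-neutral. -/
theorem stmt14 {n : ℕ} (hn : 3 ≤ n) (f : Mechanism2 n)
    (hst : ∀ P, Stable P (f P)) : ¬ WeaklyGN f := fun hGN =>
  not_stable_witness_of_symm_eq hn (symm_eq_of_weaklyGN hGN witnessPref) (hst _)
end

section
/- With two outcomes ν and μ and four agents, the upward-closed family Λ^ν generated by the minimal sets {{m_1},{w_1}} (i.e., ν is chosen iff at least one of m_1, w_1 prefers ν) defines a mechanism that is strategy-proof, efficient, and gender-neutral with respect to σ(m_i) = w_i. The same holds for the family generated by {{m_1,w_1}} (ν chosen iff both m_1 and w_1 prefer ν). -/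
/- The two-couple case.  Agents are `N = Fin 2 ⊕ Fin 2` (`inl i` = man m_i,
`inr i` = woman w_i); the symmetry σ(m_i) = w_i is `Sum.swap`.  There are exactly
two matchings, ν = {(m_0,w_0),(m_1,w_1)} and μ = {(m_0,w_1),(m_1,w_0)}; we encode
the outcome as a `Bool` (`true` = ν).  Each agent has exactly two possible strict
preferences, so a profile is identified with the set `S ⊆ N` of agents preferring ν,
and a mechanism is a function `f : Set N → Bool`. -/

abbrev Agents4 := Fin 2 ⊕ Fin 2

/-- Efficiency: no outcome that every agent strictly prefers to the chosen one. -/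
def Eff16 (f : Set Agents4 → Bool) : Prop :=
  ∀ S : Set Agents4, ¬ ∃ b : Bool, b ≠ f S ∧ ∀ i : Agents4, (b = true ↔ i ∈ S)

/-- Strategy-proofness: no agent, by changing only their own report, can move the
outcome to the matching they (truly) prefer. -/
def SP16 (f : Set Agents4 → Bool) : Prop :=
  ∀ (S S' : Set Agents4) (i : Agents4), (∀ j, j ≠ i → (j ∈ S' ↔ j ∈ S)) →
    ¬ (f S' ≠ f S ∧ (f S' = true ↔ i ∈ S))

/-- Gender-neutrality with respect to σ = `Sum.swap`: reflecting the profile leaves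
the outcome unchanged (both matchings are symmetric). -/
def GN16 (f : Set Agents4 → Bool) : Prop :=
  ∀ S : Set Agents4, f (Sum.swap '' S) = f S

/-
Both mechanisms choose ν exactly on an upward-closed family of profiles. An agent deviating
alone moves the profile down if they prefer ν and up if they prefer μ, so upward closure means
the deviation can never move the outcome towards their favourite. Efficiency only concerns the
unanimous profiles `univ` and `∅`, and gender-neutrality holds because the family is σ-invariant.
-/

lemma sp16_of_monotone {f : Set Agents4 → Bool} (hf : Monotone f) : SP16 f := by
  rintro S S' i hS' ⟨hne, hdev⟩
  by_cases hi : i ∈ S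
  · have hsub : S' ⊆ S := fun j hj => by
      by_cases hji : j = i
      · exact hji ▸ hi
      · exact (hS' j hji).1 hj
    have hS'true : f S' = true := hdev.2 hi
    exact hne (hS'true.trans (Bool.le_iff_imp.1 (hf hsub) hS'true).symm)
  · have hsub : S ⊆ S' := fun j hj => (hS' j (ne_of_mem_of_not_mem hj hi)).2 hj
    have hS'false : f S' = false := Bool.eq_false_iff.2 fun h => hi (hdev.1 h)
    exact hne (hS'false.trans (Bool.eq_false_of_le_false (hS'false ▸ hf hsub)).symm)

lemma eff16_of_univ_of_empty {f : Set Agents4 → Bool} (huniv : f Set.univ = true)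
    (hempty : f ∅ = false) : Eff16 f := by
  rintro S ⟨b, hne, hb⟩
  cases b
  · have hS : S = ∅ := Set.eq_empty_of_forall_notMem fun i hi => by simpa using (hb i).2 hi
    exact hne (hS ▸ hempty).symm
  · have hS : S = Set.univ := Set.eq_univ_of_forall fun i => (hb i).1 rfl
    exact hne (hS ▸ huniv).symm

theorem sp16_eff16_gn16_of_iff {f : Set Agents4 → Bool} {P : Set Agents4 → Prop}
    (hf : ∀ S, f S = true ↔ P S) (hmono : Monotone P) (huniv : P Set.univ) (hempty : ¬ P ∅)
    (hswap : ∀ S, P (Sum.swap '' S) ↔ P S) : SP16 f ∧ Eff16 f ∧ GN16 f := by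
  refine ⟨sp16_of_monotone fun S T hST => Bool.le_iff_imp.2 fun h => ?_,
    eff16_of_univ_of_empty ((hf _).2 huniv) (Bool.eq_false_iff.2 fun h => hempty ((hf _).1 h)),
    fun S => Bool.eq_iff_iff.2 (by rw [hf, hf, hswap])⟩
  exact (hf T).2 (hmono hST ((hf S).1 h))

/-- The matched-by-default mechanism (ν chosen iff m_0 or w_0 prefers ν, i.e. the
family generated by the minimal sets {{m_0},{w_0}}) and the unmatched-by-default
mechanism (ν chosen iff both m_0 and w_0 prefer ν, generated by {{m_0,w_0}}) are
both strategy-proof, efficient, and gender-neutral. -/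
theorem stmt17 :
    (∀ f : Set Agents4 → Bool,
      (∀ S, f S = true ↔ (Sum.inl 0 ∈ S ∨ Sum.inr 0 ∈ S)) →
      SP16 f ∧ Eff16 f ∧ GN16 f) ∧
    (∀ f : Set Agents4 → Bool,
      (∀ S, f S = true ↔ (Sum.inl 0 ∈ S ∧ Sum.inr 0 ∈ S)) →
      SP16 f ∧ Eff16 f ∧ GN16 f) := by
  constructor
  · intro f hf
    refine sp16_eff16_gn16_of_iff hf (fun S T hST => ?_) (by simp) (by simp) (by simp [or_comm])
    exact Or.imp (@hST _) (@hST _)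
  · intro f hf
    refine sp16_eff16_gn16_of_iff hf (fun S T hST => ?_) (by simp) (by simp) (by simp [and_comm])
    exact And.imp (@hST _) (@hST _)
end
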